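/- arXiv:2306.00171 — 10 statements merged into one kernel-verified Lean document; each statement's English description precedes it below -/
import Mathlib

section
/- A nonnegative integer sequence (f_1, ..., f_m) with |f_i - f_j| ≤ 1 for all i, j is the degree sequence of a simple graph if and only if (i) m ≥ max_i f_i + 1 and (ii) Σ f_i is even. -/
/-!
Necessity: a degree is at most `m - 1`, and the degrees sum to twice the number of edges.

Sufficiency: among all graphs on `m` vertices with `E = (∑ f) / 2` edges, take one minimising
`∑ deg²`. If `deg u ≥ deg w + 2`, then `u` has a neighbour `z ≠ w` that is not adjacent to `w`,
and replacing the edge `uz` by `wz` lowers `∑ deg²`; so the minimiser is almost regular.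
An almost constant sequence of length `m` and sum `s` takes the value `s / m + 1` exactly
`s % m` times and `s / m` otherwise, so the degree sequence of that graph is a rearrangement of `f`.
-/

open Finset

def IsAlmostConstant {ι : Type*} (f : ι → ℕ) : Prop :=
  ∀ i j, f i ≤ f j + 1

namespace IsAlmostConstant

variable {ι : Type*} [Fintype ι] {f g : ι → ℕ}

theorem eq_sum_div_or_succ_and_card_eq_sum_mod [Nonempty ι] (hf : IsAlmostConstant f) :
    (∀ i, f i = (∑ j, f j) / Fintype.card ι ∨ f i = (∑ j, f j) / Fintype.card ι + 1) ∧
      #{i | f i = (∑ j, f j) / Fintype.card ι + 1} = (∑ j, f j) % Fintype.card ι := by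
  obtain ⟨i₀, -, hmin⟩ := exists_min_image univ f univ_nonempty
  have hval : ∀ i, f i = f i₀ ∨ f i = f i₀ + 1 := fun i => by
    have := hf i i₀
    have := hmin i (mem_univ i)
    omega
  have hsum : ∑ i, f i = #{i | f i = f i₀ + 1} + Fintype.card ι * f i₀ := by
    calc ∑ i, f i = ∑ i, (f i₀ + if f i = f i₀ + 1 then 1 else 0) :=
          sum_congr rfl fun i _ => by rcases hval i with h | h <;> simp [h]
      _ = _ := by rw [sum_add_distrib, sum_const, card_univ, smul_eq_mul, sum_boole, Nat.cast_id,
          add_comm]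
  have hk : #{i | f i = f i₀ + 1} < Fintype.card ι :=
    card_lt_univ_of_notMem (x := i₀) (by simp)
  obtain ⟨hdiv, hmod⟩ := (Nat.div_mod_unique Fintype.card_pos).2 ⟨hsum.symm, hk⟩
  rw [hdiv, hmod]
  exact ⟨hval, rfl⟩

theorem card_fiber_eq (hf : IsAlmostConstant f) (hg : IsAlmostConstant g)
    (hsum : ∑ i, f i = ∑ i, g i) (c : ℕ) : #{i | f i = c} = #{i | g i = c} := by
  cases isEmpty_or_nonempty ι
  · simp [univ_eq_empty]
  obtain ⟨hfval, hfcard⟩ := hf.eq_sum_div_or_succ_and_card_eq_sum_mod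
  obtain ⟨hgval, hgcard⟩ := hg.eq_sum_div_or_succ_and_card_eq_sum_mod
  rw [← hsum] at hgval hgcard
  set q := (∑ j, f j) / Fintype.card ι
  suffices key : ∀ h : ι → ℕ, (∀ i, h i = q ∨ h i = q + 1) →
      #{i | h i = q + 1} = (∑ j, f j) % Fintype.card ι → #{i | h i = c} =
        if c = q + 1 then (∑ j, f j) % Fintype.card ι
        else if c = q then Fintype.card ι - (∑ j, f j) % Fintype.card ι else 0 by
    rw [key f hfval hfcard, key g hgval hgcard]
  intro h hval hcard
  split_ifs with hc₁ hc₂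
  · rw [hc₁, hcard]
  · have hcompl : ({i | h i = q} : Finset ι) = filter (fun i => ¬h i = q + 1) univ :=
      filter_congr fun i _ => by rcases hval i with hi | hi <;> simp [hi]
    have := card_filter_add_card_filter_not (s := univ) (fun i => h i = q + 1)
    rw [hc₂, hcompl, ← hcard, ← card_univ]
    omega
  · rw [card_eq_zero, filter_eq_empty_iff]
    rintro i - rfl
    rcases hval i with hi | hi <;> simp_all

theorem exists_perm (hf : IsAlmostConstant f) (hg : IsAlmostConstant g)
    (hsum : ∑ i, f i = ∑ i, g i) : ∃ σ : Equiv.Perm ι, ∀ i, g (σ i) = f i :=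
  ⟨Equiv.ofFiberEquiv fun c => Fintype.equivOfCardEq <| by
    simpa only [Fintype.card_subtype] using hf.card_fiber_eq hg hsum c, Equiv.ofFiberEquiv_map _⟩

end IsAlmostConstant

theorem sum_sq_lt_of_transfer {ι : Type*} [Fintype ι] [DecidableEq ι] {f g : ι → ℕ} {u w : ι}
    (huw : u ≠ w) (hu : g u + 1 = f u) (hw : g w = f w + 1)
    (hrest : ∀ v, v ≠ u → v ≠ w → g v = f v) (hgap : f w + 2 ≤ f u) :
    ∑ v, g v ^ 2 < ∑ v, f v ^ 2 := by
  have hw_mem : w ∈ univ.erase u := mem_erase.2 ⟨huw.symm, mem_univ w⟩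
  have split : ∀ h : ι → ℕ,
      ∑ v, h v ^ 2 = h u ^ 2 + (h w ^ 2 + ∑ v ∈ (univ.erase u).erase w, h v ^ 2) := fun h => by
    rw [← add_sum_erase _ _ (mem_univ u), ← add_sum_erase _ _ hw_mem]
  have hsame : ∑ v ∈ (univ.erase u).erase w, g v ^ 2 = ∑ v ∈ (univ.erase u).erase w, f v ^ 2 :=
    sum_congr rfl fun v hv => by
      simp only [mem_erase] at hv
      rw [hrest v hv.2.1 hv.1]
  rw [split f, split g, hsame, hw]
  nlinarith

namespace SimpleGraph

open scoped Classical

variable {V : Type*} [Fintype V]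

theorem exists_replace_edge (G : SimpleGraph V) {e e' : Sym2 V}
    (he : e ∈ G.edgeSet) (he' : e' ∉ G.edgeSet) (hdiag : ¬e'.IsDiag) :
    ∃ G' : SimpleGraph V, #G'.edgeFinset = #G.edgeFinset ∧
      ∀ v, G'.degree v + (if v ∈ e then 1 else 0) = G.degree v + (if v ∈ e' then 1 else 0) := by
  obtain ⟨G', hG'⟩ : ∃ G' : SimpleGraph V, G'.edgeSet = insert e' (G.edgeSet \ {e}) := by
    refine ⟨fromEdgeSet (insert e' (G.edgeSet \ {e})), ?_⟩
    rw [edgeSet_fromEdgeSet]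
    ext x
    simp only [Set.mem_insert_iff, Set.mem_sdiff, Set.mem_singleton_iff, Sym2.mem_diagSet,
      and_iff_left_iff_imp]
    rintro (rfl | ⟨hx, -⟩)
    exacts [hdiag, G.not_isDiag_of_mem_edgeSet hx]
  have hedges : G'.edgeFinset = insert e' (G.edgeFinset.erase e) := by
    ext x
    simp [hG', and_comm]
  refine ⟨G', ?_, fun v => ?_⟩
  · rw [hedges, card_insert_of_notMem (by simp [he']), card_erase_of_mem (by simpa using he),
      Nat.sub_add_cancel (card_pos.2 ⟨e, by simpa using he⟩)]
  · simp only [← card_incidenceFinset_eq_degree, incidenceFinset_eq_filter, hedges,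
      filter_insert, filter_erase]
    have he'_notMem : e' ∉ ({x ∈ G.edgeFinset | v ∈ x}.erase e) := by simp [he']
    by_cases hv : v ∈ e
    · have he_mem : e ∈ {x ∈ G.edgeFinset | v ∈ x} := by simpa [hv] using he
      split_ifs <;> simp [card_insert_of_notMem he'_notMem, card_erase_add_one he_mem]
    · have he_notMem : e ∉ {x ∈ G.edgeFinset | v ∈ x} := by simp [hv]
      rw [erase_eq_of_notMem he_notMem] at he'_notMem ⊢
      split_ifs <;> simp [card_insert_of_notMem he'_notMem]

theorem exists_degree_transfer (G : SimpleGraph V) {u w : V}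
    (hgap : G.degree w + 2 ≤ G.degree u) :
    ∃ G' : SimpleGraph V, #G'.edgeFinset = #G.edgeFinset ∧ G'.degree u + 1 = G.degree u ∧
      G'.degree w = G.degree w + 1 ∧ ∀ v, v ≠ u → v ≠ w → G'.degree v = G.degree v := by
  have hlt : #(insert w (G.neighborFinset w)) < #(G.neighborFinset u) := by
    grw [card_insert_le]
    rw [card_neighborFinset_eq_degree, card_neighborFinset_eq_degree]
    omega
  obtain ⟨z, hz, hzw⟩ := exists_mem_notMem_of_card_lt_card hlt
  rw [mem_insert, mem_neighborFinset, not_or] at hzw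
  rw [mem_neighborFinset] at hz
  have huw : u ≠ w := by rintro rfl; omega
  obtain ⟨G', hcard, hdeg⟩ := G.exists_replace_edge (e := s(u, z)) (e' := s(w, z)) hz
    (by simpa using hzw.2) (by simpa using Ne.symm hzw.1)
  refine ⟨G', hcard, ?_, ?_, fun v hvu hvw => ?_⟩
  · simpa [huw, hz.ne] using hdeg u
  · simpa [huw.symm, Ne.symm hzw.1] using hdeg w
  · by_cases hvz : v = z
    · subst hvz; simpa using hdeg v
    · simpa [hvu, hvw, hvz] using hdeg v

theorem exists_card_edgeFinset_eq {E : ℕ} (hE : E ≤ (Fintype.card V).choose 2) :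
    ∃ G : SimpleGraph V, #G.edgeFinset = E := by
  rw [← card_edgeFinset_top_eq_card_choose_two] at hE
  obtain ⟨S, hS, rfl⟩ := exists_subset_card_eq hE
  refine ⟨fromEdgeSet S, congrArg card ?_⟩
  ext e
  simp only [mem_edgeFinset, edgeSet_fromEdgeSet, Set.mem_sdiff, mem_coe, Sym2.mem_diagSet,
    and_iff_left_iff_imp]
  exact fun he => (⊤ : SimpleGraph V).not_isDiag_of_mem_edgeSet (by simpa using hS he)

theorem exists_isAlmostConstant_degree {E : ℕ} (hE : E ≤ (Fintype.card V).choose 2) :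
    ∃ G : SimpleGraph V, #G.edgeFinset = E ∧ IsAlmostConstant fun v => G.degree v := by
  obtain ⟨G₀, hG₀⟩ := exists_card_edgeFinset_eq (V := V) hE
  obtain ⟨G, hG, hmin⟩ := exists_min_image {G : SimpleGraph V | #G.edgeFinset = E}
    (fun G => ∑ v, G.degree v ^ 2) ⟨G₀, mem_filter.2 ⟨mem_univ _, hG₀⟩⟩
  rw [mem_filter] at hG
  refine ⟨G, hG.2, fun u w => ?_⟩
  by_contra! hlt
  have hgap : G.degree w + 2 ≤ G.degree u := hlt
  obtain ⟨G', hcard, hu, hw, hrest⟩ := G.exists_degree_transfer hgap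
  have huw : u ≠ w := by rintro rfl; omega
  exact (sum_sq_lt_of_transfer huw hu hw hrest hgap).not_ge
    (hmin G' (mem_filter.2 ⟨mem_univ _, hcard.trans hG.2⟩))

end SimpleGraph

/-- A nonnegative integer sequence `(f 1, …, f m)` with `|f i - f j| ≤ 1` for all `i, j`
is the degree sequence of a simple graph iff (i) `m ≥ max f i + 1` and
(ii) `Σ f i` is even. -/
theorem stmt0 (m : ℕ) (f : Fin m → ℕ)
    (hflat : ∀ i j, |(f i : ℤ) - (f j : ℤ)| ≤ 1) :
    (∃ (G : SimpleGraph (Fin m)) (_ : DecidableRel G.Adj) (σ : Equiv.Perm (Fin m)),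
        ∀ i, G.degree (σ i) = f i)
      ↔ ((∀ i, f i + 1 ≤ m) ∧ Even (∑ i, f i)) := by
  classical
  constructor
  · rintro ⟨G, _, σ, hσ⟩
    have hsum : ∑ i, f i = ∑ v, G.degree v := by
      simp only [← hσ, Equiv.sum_comp σ fun v => G.degree v]
    refine ⟨fun i => ?_, ?_⟩
    · simpa [hσ i] using G.degree_lt_card_verts (σ i)
    · rw [hsum, G.sum_degrees_eq_twice_card_edges]
      exact even_two_mul _
  · rintro ⟨hmax, E, hE⟩
    have hf : IsAlmostConstant f := fun i j => by
      have := abs_le.1 (hflat i j)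
      omega
    have hsum_le : ∑ i, f i ≤ m * (m - 1) := by
      simpa using sum_le_sum fun i (_ : i ∈ univ) => (by have := hmax i; omega : f i ≤ m - 1)
    have hE_le : E ≤ (Fintype.card (Fin m)).choose 2 := by
      rw [Fintype.card_fin, Nat.choose_two_right, Nat.le_div_iff_mul_le two_pos]
      omega
    obtain ⟨G, hcard, hG⟩ := SimpleGraph.exists_isAlmostConstant_degree hE_le
    have hsum : ∑ i, f i = ∑ v, G.degree v := by
      rw [G.sum_degrees_eq_twice_card_edges, hcard, hE, two_mul]
    obtain ⟨σ, hσ⟩ := hf.exists_perm hG hsum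
    exact ⟨G, inferInstance, σ, hσ⟩
end

section
/- Let G be a simple graph, v a vertex, and suppose the number of non-edges in the induced subgraph on N(v) exceeds ϑD². Let τ assign to each vertex an independent uniform color from Γ = [D], where D ≥ deg(u) for all u. For nonadjacent w, z ∈ N(v), let A^v_{wz} be the event that τ_w = τ_z and τ_x ≠ τ_w for all x ∈ (N(v) ∪ N(w) ∪ N(z)) \ {w, z}. Then P(A^v_{wz}) = D^{-1}(1 - 1/D)^{|J|} where J = (N(v) ∪ N(w) ∪ N(z)) \ {w, z}, and consequently the expected number of pairs {w,z} ⊆ N(v) for which A^v_{wz} holds is greater than ϑ D e^{-3}, provided |J| ≤ 3D - 3. -/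
/-!
For a colour `c`, the colourings giving `w` and `z` the colour `c` while `J` avoids it form a
product set, of probability `D⁻² (1 - 1/D)^|J|`; summing over the `D` colours gives the exact
probability. Since `|J| ≤ 3(D - 1)` and `(1 - 1/D)^(D-1) ≥ e⁻¹` (from `log y ≥ 1 - 1/y`), each
such probability is at least `e⁻³ / D`, and there are more than `ϑD²` nonadjacent pairs.
-/

open scoped Classical

open Finset Real

theorem exp_neg_le_one_sub_inv_pow {x k : ℝ} (hx : 1 < x) {m : ℕ} (hm : (m : ℝ) ≤ k * (x - 1)) :
    exp (-k) ≤ (1 - 1 / x) ^ m := by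
  have hx1 : 0 < x - 1 := by linarith
  have hy : 0 < 1 - 1 / x := by rw [sub_pos, div_lt_one (by linarith)]; exact hx
  have hlog : -(x - 1)⁻¹ ≤ log (1 - 1 / x) := by
    convert one_sub_inv_le_log_of_pos hy using 1
    field_simp
    ring
  calc exp (-k) ≤ exp (m * -(x - 1)⁻¹) := by
        rw [mul_neg, ← div_eq_mul_inv, exp_le_exp, neg_le_neg_iff, div_le_iff₀ hx1]
        exact hm
    _ ≤ exp (m * log (1 - 1 / x)) := by gcongr
    _ = (1 - 1 / x) ^ m := by rw [exp_nat_mul, exp_log hy]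

theorem exp_neg_three_le_one_sub_inv_pow {D m : ℕ} (hm : m ≤ 3 * D - 3) :
    exp (-3) ≤ (1 - 1 / (D : ℝ)) ^ m := by
  rcases Nat.lt_or_ge D 2 with hD | hD
  · obtain rfl : m = 0 := by omega
    simp
  · apply exp_neg_le_one_sub_inv_pow (by exact_mod_cast hD)
    have : (m : ℝ) + 3 ≤ 3 * D := by exact_mod_cast (by omega : m + 3 ≤ 3 * D)
    linarith

theorem card_piFinset_div_card_fun {V α : Type*} [Fintype V] [DecidableEq V] [Fintype α]
    (s : V → Finset α) :
    ((Fintype.piFinset s).card : ℝ) / Fintype.card (V → α) =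
      ∏ x, ((s x).card : ℝ) / Fintype.card α := by
  rw [Fintype.card_piFinset, Fintype.card_fun, prod_div_distrib, prod_const, card_univ]
  push_cast
  rfl

section MonochromaticAvoiding

variable {V α : Type*} [DecidableEq V] [Fintype α] [DecidableEq α]

def monoAvoidingColors (S J : Finset V) (c : α) (x : V) : Finset α :=
  if x ∈ S then {c} else if x ∈ J then {c}ᶜ else univ

theorem card_monoAvoidingColors_div (S J : Finset V) (c : α) (x : V) :
    ((monoAvoidingColors S J c x).card : ℝ) / Fintype.card α =
      if x ∈ S then (Fintype.card α : ℝ)⁻¹ else if x ∈ J then 1 - 1 / (Fintype.card α : ℝ)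
      else 1 := by
  have hα : 1 ≤ Fintype.card α := Fintype.card_pos_iff.mpr ⟨c⟩
  have hα' : (Fintype.card α : ℝ) ≠ 0 := by positivity
  unfold monoAvoidingColors
  split_ifs
  · simp
  · rw [card_compl, card_singleton, Nat.cast_sub hα]
    field_simp
    simp
  · simp [hα']

variable [Fintype V]

theorem mem_piFinset_monoAvoidingColors {S J : Finset V} (hSJ : Disjoint S J) {c : α}
    {τ : V → α} :
    τ ∈ Fintype.piFinset (monoAvoidingColors S J c) ↔ (∀ x ∈ S, τ x = c) ∧ ∀ x ∈ J, τ x ≠ c := by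
  simp only [Fintype.mem_piFinset, monoAvoidingColors]
  constructor
  · intro h
    refine ⟨fun x hx => by simpa [hx] using h x, fun x hx => ?_⟩
    simpa [hx, disjoint_right.mp hSJ hx] using h x
  · rintro ⟨hS, hJ⟩ x
    split_ifs with hxS hxJ
    · simpa using hS x hxS
    · simpa using hJ x hxJ
    · exact mem_univ _

theorem card_piFinset_monoAvoidingColors_div {S J : Finset V} (hSJ : Disjoint S J) (c : α) :
    ((Fintype.piFinset (monoAvoidingColors S J c)).card : ℝ) / Fintype.card (V → α) =
      (Fintype.card α : ℝ)⁻¹ ^ S.card * (1 - 1 / (Fintype.card α : ℝ)) ^ J.card := by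
  have hS : univ.filter (· ∈ S) = S := by ext; simp
  have hJ : (univ.filter (· ∉ S)).filter (· ∈ J) = J := by
    ext x
    simpa using fun hx => disjoint_right.mp hSJ hx
  simp_rw [card_piFinset_div_card_fun, card_monoAvoidingColors_div, prod_ite, prod_const_one,
    mul_one, prod_const, hS, hJ]

theorem card_filter_monoAvoiding_div {S J : Finset V} (hS : S.Nonempty) (hSJ : Disjoint S J)
    {E : (V → α) → Prop} [DecidablePred E]
    (hE : ∀ τ, E τ ↔ ∃ c, (∀ x ∈ S, τ x = c) ∧ ∀ x ∈ J, τ x ≠ c) :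
    ((univ.filter E).card : ℝ) / Fintype.card (V → α) =
      Fintype.card α * (Fintype.card α : ℝ)⁻¹ ^ S.card *
        (1 - 1 / (Fintype.card α : ℝ)) ^ J.card := by
  have hset :
      univ.filter E = univ.biUnion fun c => Fintype.piFinset (monoAvoidingColors S J c) := by
    ext τ
    simp [hE, mem_piFinset_monoAvoidingColors hSJ]
  have hdisj : (↑(univ : Finset α) : Set α).PairwiseDisjoint
      fun c => Fintype.piFinset (monoAvoidingColors S J c) := by
    intro c _ d _ hcd
    refine disjoint_left.mpr fun τ hc hd => hcd ?_
    obtain ⟨x, hx⟩ := hS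
    rw [← ((mem_piFinset_monoAvoidingColors hSJ).mp hc).1 x hx,
      ((mem_piFinset_monoAvoidingColors hSJ).mp hd).1 x hx]
  rw [hset, card_biUnion hdisj, Nat.cast_sum, sum_div]
  simp_rw [card_piFinset_monoAvoidingColors_div hSJ, sum_const, card_univ, nsmul_eq_mul]
  ring

theorem card_filter_pair_avoiding_div {w z : V} (hwz : w ≠ z) {J : Finset V}
    (hJ : Disjoint {w, z} J) {E : (V → α) → Prop} [DecidablePred E]
    (hE : ∀ τ, E τ ↔ τ w = τ z ∧ ∀ x ∈ J, τ x ≠ τ w) :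
    ((univ.filter E).card : ℝ) / Fintype.card (V → α) =
      (Fintype.card α : ℝ)⁻¹ * (1 - 1 / (Fintype.card α : ℝ)) ^ J.card := by
  have hE' (τ : V → α) : E τ ↔ ∃ c, (∀ x ∈ ({w, z} : Finset V), τ x = c) ∧ ∀ x ∈ J, τ x ≠ c := by
    simp only [hE, mem_insert, mem_singleton, forall_eq_or_imp, forall_eq]
    exact ⟨fun ⟨hwz, hJ⟩ => ⟨τ w, ⟨rfl, hwz.symm⟩, hJ⟩,
      fun ⟨c, ⟨hw, hz⟩, hJ⟩ => ⟨hw.trans hz.symm, hw ▸ hJ⟩⟩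
  rw [card_filter_monoAvoiding_div (insert_nonempty w {z}) hJ hE', card_pair hwz]
  rcases eq_or_ne (Fintype.card α : ℝ) 0 with hα | hα
  · simp [hα]
  · field_simp

end MonochromaticAvoiding

theorem stmt2_general {V : Type*} [Fintype V] [DecidableEq V]
    (G : SimpleGraph V) [DecidableRel G.Adj] (D : ℕ) (hD : 0 < D)
    (ϑ : ℝ) (v : V)
    -- `J` for a nonadjacent pair `w, z ∈ N(v)`
    (J : V → V → Finset V)
    (hJdef : ∀ w z : V, J w z =
      (G.neighborFinset v ∪ G.neighborFinset w ∪ G.neighborFinset z) \ {w, z})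
    -- the probability of an event, for a uniform random coloring `τ : V → Fin D`
    (Pr : ((V → Fin D) → Prop) → ℝ)
    (hPr : ∀ E : (V → Fin D) → Prop,
      Pr E = ((Finset.univ.filter E).card : ℝ) / (Fintype.card (V → Fin D)))
    -- the event `A^v_{wz}`
    (A : V → V → (V → Fin D) → Prop)
    (hA : ∀ w z : V, ∀ τ : V → Fin D,
      A w z τ ↔ (τ w = τ z ∧ ∀ x ∈ J w z, τ x ≠ τ w))
    -- more than `ϑD²` non-edges inside `N(v)`
    (hsparse : ϑ * (D : ℝ) ^ 2 <
      (((G.neighborFinset v ×ˢ G.neighborFinset v).filter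
        (fun p => p.1 ≠ p.2 ∧ ¬ G.Adj p.1 p.2)).card : ℝ) / 2)
    -- `|J| ≤ 3D - 3` for the relevant pairs
    (hJcard : ∀ w z : V, w ∈ G.neighborFinset v → z ∈ G.neighborFinset v →
      w ≠ z → ¬ G.Adj w z → (J w z).card ≤ 3 * D - 3) :
    (∀ w z : V, w ∈ G.neighborFinset v → z ∈ G.neighborFinset v →
        w ≠ z → ¬ G.Adj w z →
        Pr (A w z) = (D : ℝ)⁻¹ * (1 - 1 / (D : ℝ)) ^ ((J w z).card)) ∧
    ϑ * (D : ℝ) * Real.exp (-3) <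
      (∑ p ∈ (G.neighborFinset v ×ˢ G.neighborFinset v).filter
          (fun p => p.1 ≠ p.2 ∧ ¬ G.Adj p.1 p.2), Pr (A p.1 p.2)) / 2 := by
  have hprob : ∀ w z : V, w ∈ G.neighborFinset v → z ∈ G.neighborFinset v →
      w ≠ z → ¬ G.Adj w z → Pr (A w z) = (D : ℝ)⁻¹ * (1 - 1 / (D : ℝ)) ^ ((J w z).card) := by
    intro w z _ _ hwz _
    rw [hPr, card_filter_pair_avoiding_div hwz (by rw [hJdef]; exact disjoint_sdiff) (hA w z),
      Fintype.card_fin]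
  refine ⟨hprob, ?_⟩
  set P := (G.neighborFinset v ×ˢ G.neighborFinset v).filter
    (fun p => p.1 ≠ p.2 ∧ ¬ G.Adj p.1 p.2)
  have hterm : ∀ p ∈ P, (D : ℝ)⁻¹ * exp (-3) ≤ Pr (A p.1 p.2) := by
    intro p hp
    obtain ⟨⟨hw, hz⟩, hwz, hadj⟩ := by simpa only [P, mem_filter, mem_product] using hp
    rw [hprob _ _ hw hz hwz hadj]
    gcongr
    exact exp_neg_three_le_one_sub_inv_pow (hJcard _ _ hw hz hwz hadj)
  have hsum := card_nsmul_le_sum P _ _ hterm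
  rw [nsmul_eq_mul] at hsum
  calc ϑ * D * exp (-3) = ϑ * D ^ 2 * ((D : ℝ)⁻¹ * exp (-3)) := by field_simp
    _ < P.card / 2 * ((D : ℝ)⁻¹ * exp (-3)) := by gcongr
    _ ≤ (∑ p ∈ P, Pr (A p.1 p.2)) / 2 := by linarith

/-- For a vertex `v` whose neighborhood spans more than `ϑD²` non-edges, with each vertex
independently uniformly colored from `D` colors: for nonadjacent `w, z ∈ N(v)` the event
`A^v_{wz}` (that `τ w = τ z` and no vertex of `J = (N(v) ∪ N(w) ∪ N(z)) \ {w,z}` gets this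
color) has probability exactly `D⁻¹ (1 - 1/D)^{|J|}`, and consequently the expected number
of pairs `{w,z} ⊆ N(v)` for which `A^v_{wz}` holds exceeds `ϑ D e⁻³`,
provided `|J| ≤ 3D - 3` always. -/
theorem stmt2 {V : Type*} [Fintype V] [DecidableEq V]
    (G : SimpleGraph V) [DecidableRel G.Adj] (D : ℕ) (hD : 0 < D)
    (hdeg : ∀ u : V, G.degree u ≤ D) (ϑ : ℝ) (hϑ : 0 < ϑ) (v : V)
    -- `J` for a nonadjacent pair `w, z ∈ N(v)`
    (J : V → V → Finset V)
    (hJdef : ∀ w z : V, J w z =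
      (G.neighborFinset v ∪ G.neighborFinset w ∪ G.neighborFinset z) \ {w, z})
    -- the probability of an event, for a uniform random coloring `τ : V → Fin D`
    (Pr : ((V → Fin D) → Prop) → ℝ)
    (hPr : ∀ E : (V → Fin D) → Prop,
      Pr E = ((Finset.univ.filter E).card : ℝ) / (Fintype.card (V → Fin D)))
    -- the event `A^v_{wz}`
    (A : V → V → (V → Fin D) → Prop)
    (hA : ∀ w z : V, ∀ τ : V → Fin D,
      A w z τ ↔ (τ w = τ z ∧ ∀ x ∈ J w z, τ x ≠ τ w))
    -- more than `ϑD²` non-edges inside `N(v)`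
    (hsparse : ϑ * (D : ℝ) ^ 2 <
      (((G.neighborFinset v ×ˢ G.neighborFinset v).filter
        (fun p => p.1 ≠ p.2 ∧ ¬ G.Adj p.1 p.2)).card : ℝ) / 2)
    -- `|J| ≤ 3D - 3` for the relevant pairs
    (hJcard : ∀ w z : V, w ∈ G.neighborFinset v → z ∈ G.neighborFinset v →
      w ≠ z → ¬ G.Adj w z → (J w z).card ≤ 3 * D - 3) :
    (∀ w z : V, w ∈ G.neighborFinset v → z ∈ G.neighborFinset v →
        w ≠ z → ¬ G.Adj w z →
        Pr (A w z) = (D : ℝ)⁻¹ * (1 - 1 / (D : ℝ)) ^ ((J w z).card)) ∧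
    ϑ * (D : ℝ) * Real.exp (-3) <
      (∑ p ∈ (G.neighborFinset v ×ˢ G.neighborFinset v).filter
          (fun p => p.1 ≠ p.2 ∧ ¬ G.Adj p.1 p.2), Pr (A p.1 p.2)) / 2 :=
  stmt2_general G D hD ϑ v J hJdef Pr hPr A hA hsparse hJcard
end

section
/- Let X, Y be finite sets with |X| ≤ |Y|, let (d_x : x ∈ X) be given nonnegative integers with d_x ≤ |Y|, and let L be the random bipartite graph where each x ∈ X independently gets a uniform s-subset of Y as its neighborhood. Among all bipartite graphs F on X ∪ Y with deg_F(x) = d_x for all x ∈ X, the probability that L ∩ F admits an X-perfect matching is minimized by the graph F in which, for some fixed linear ordering of Y, each x ∈ X is adjacent to the first d_x vertices of Y. -/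
open scoped Classical

/-!
Compressing `F` from `j` to `i` (each `x` with `(x, j) ∈ F`, `(x, i) ∉ F` trades `j` for `i`)
keeps the left degrees, and compressions towards smaller vertices of `Fin N` lower
`∑ (x, y) ∈ F, y`, so they end at the left-aligned graph. It therefore suffices that one
compression does not increase the number of neighbourhood choices `g` for which `F ∩ g` has an
`X`-perfect matching.

That follows from an injection `switch` of the choices, exchanging `i` and `j` in `g x` for the
`x` in `switchSet`, which sends choices that are bad for `F` to choices that are bad for the
compressed graph. The set consists of the moved `x` with exactly one of `i, j` in `g x`, and of the
`x` joined to both `i` and `j` with exactly one of them in `g x` that reach a moved `x'` with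
`j ∈ g x'` by a chain of such vertices, consecutive vertices `u, v` being `Linked`: `X \ {u, v}`
can be matched into `F ∩ g` avoiding `i` and `j`. When `F ∩ g` has no matching, every vertex of
such a chain has `j ∈ g x`; this is what turns a matching of the compressed graph back into one
of `F ∩ g`. The exchange leaves `Swappable`, `Linked` and `Separates` unchanged and turns the
anchors `MovesWith F i j g j` into `MovesWith F i j (switch F i j g) i`, so the set can be
recomputed from the image and `switch` is injective.
-/

section

open Finset Function

variable {X Y : Type*}

def HasMatching (E : Finset (X × Y)) (g : X → Finset Y) : Prop :=
  ∃ f : X ↪ Y, ∀ x, (x, f x) ∈ E ∧ f x ∈ g x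

def MatchableAvoiding (E : Finset (X × Y)) (g : X → Finset Y) (B : Set Y) (S : Set X) : Prop :=
  ∃ f : X → Y, Set.InjOn f S ∧ ∀ z ∈ S, (z, f z) ∈ E ∧ f z ∈ g z ∧ f z ∉ B

namespace MatchableAvoiding

variable {E : Finset (X × Y)} {g : X → Finset Y} {B : Set Y} {S : Set X}

theorem extend [DecidableEq X] (h : MatchableAvoiding E g B S) {u : X} {b : Y} (hb : b ∈ B)
    (hu : (u, b) ∈ E) (hbu : b ∈ g u) : MatchableAvoiding E g (B \ {b}) (insert u S) := by
  obtain ⟨f, hinj, hf⟩ := h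
  have hne : ∀ z ∈ S, f z ≠ b := fun z hz hfz => (hf z hz).2.2 (hfz ▸ hb)
  refine ⟨update f u b, fun z₁ hz₁ z₂ hz₂ heq => ?_, fun z hz => ?_⟩
  · rcases eq_or_ne z₁ u with h₁ | h₁ <;> rcases eq_or_ne z₂ u with h₂ | h₂
    · exact h₁.trans h₂.symm
    · simp only [h₁, update_self, update_of_ne h₂] at heq
      exact absurd heq.symm (hne z₂ (hz₂.resolve_left h₂))
    · simp only [h₂, update_self, update_of_ne h₁] at heq
      exact absurd heq (hne z₁ (hz₁.resolve_left h₁))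
    · simp only [update_of_ne h₁, update_of_ne h₂] at heq
      exact hinj (hz₁.resolve_left h₁) (hz₂.resolve_left h₂) heq
  · rcases eq_or_ne z u with rfl | hzu
    · simp [hu, hbu]
    · obtain ⟨h₁, h₂, h₃⟩ := hf z (hz.resolve_left hzu)
      simp [update_of_ne hzu, h₁, h₂, h₃]

theorem hasMatching (h : MatchableAvoiding E g B Set.univ) : HasMatching E g := by
  obtain ⟨f, hinj, hf⟩ := h
  exact ⟨⟨f, Set.injOn_univ.1 hinj⟩, fun x => ⟨(hf x trivial).1, (hf x trivial).2.1⟩⟩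

theorem hasMatching_of_single [DecidableEq X] {u : X} {b : Y}
    (h : MatchableAvoiding E g B {u}ᶜ) (hb : b ∈ B) (hu : (u, b) ∈ E) (hbu : b ∈ g u) :
    HasMatching E g := by
  have h' := h.extend hb hu hbu
  rw [show insert u ({u}ᶜ : Set X) = Set.univ by ext; simp [em]] at h'
  exact h'.hasMatching

theorem hasMatching_of_pair [DecidableEq X] {u v : X} {a b : Y} (hab : a ≠ b)
    (h : MatchableAvoiding E g {a, b} {u, v}ᶜ) (hu : (u, a) ∈ E) (hau : a ∈ g u)
    (hv : (v, b) ∈ E) (hbv : b ∈ g v) : HasMatching E g := by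
  have h' := (h.extend (by simp) hv hbv).extend (b := a) (by simp [hab]) hu hau
  rw [show insert u (insert v ({u, v}ᶜ : Set X)) = Set.univ by ext; simp; tauto] at h'
  exact h'.hasMatching

end MatchableAvoiding

inductive Reaches (V : X → Prop) (R : X → X → Prop) (D : X → Prop) : X → Prop
  | base {u x : X} : V u → D x → R u x → Reaches V R D u
  | step {v u : X} : V v → R v u → Reaches V R D u → Reaches V R D v

theorem Reaches.prop {V : X → Prop} {R : X → X → Prop} {D : X → Prop} {v : X}
    (h : Reaches V R D v) : V v := by
  cases h with
  | base hv _ _ => exact hv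
  | step hv _ _ => exact hv

def Separates (i j : Y) (g : X → Finset Y) (x : X) : Prop := i ∈ g x ↔ j ∉ g x

section Swap

variable [DecidableEq Y] (i j : Y)

noncomputable def swapAt (A : Set X) (g : X → Finset Y) (x : X) : Finset Y :=
  if x ∈ A then (g x).map (Equiv.swap i j).toEmbedding else g x

variable {i j} {A : Set X} {g : X → Finset Y}

theorem mem_swapAt {x : X} {y : Y} :
    y ∈ swapAt i j A g x ↔ (if x ∈ A then Equiv.swap i j y else y) ∈ g x := by
  unfold swapAt; split_ifs <;> simp [Finset.mem_map_equiv]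

theorem mem_swapAt_of_ne {x : X} {y : Y} (hi : y ≠ i) (hj : y ≠ j) :
    y ∈ swapAt i j A g x ↔ y ∈ g x := by
  rw [mem_swapAt, Equiv.swap_apply_of_ne_of_ne hi hj, ite_self]

theorem card_swapAt (x : X) : (swapAt i j A g x).card = (g x).card := by
  unfold swapAt; split_ifs <;> simp

theorem swapAt_swapAt : swapAt i j A (swapAt i j A g) = g := by
  funext x; ext y; simp only [mem_swapAt]; split_ifs <;> simp

theorem separates_swapAt : Separates i j (swapAt i j A g) = Separates i j g := by
  funext x
  refine propext ?_
  simp only [Separates, mem_swapAt]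
  split_ifs <;> simp only [Equiv.swap_apply_left, Equiv.swap_apply_right]
  tauto

theorem matchableAvoiding_swapAt {E : Finset (X × Y)} :
    MatchableAvoiding E (swapAt i j A g) {i, j} = MatchableAvoiding E g {i, j} := by
  funext S
  refine propext (exists_congr fun f => and_congr_right fun _ => forall₂_congr fun z _ => ?_)
  by_cases hB : f z ∈ ({i, j} : Set Y)
  · simp [hB]
  · simp only [Set.mem_insert_iff, Set.mem_singleton_iff, not_or] at hB
    rw [mem_swapAt_of_ne hB.1 hB.2]

end Swap

section Switching

variable (F : Finset (X × Y)) (i j : Y) (g : X → Finset Y)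

def Moves (x : X) : Prop := (x, j) ∈ F ∧ (x, i) ∉ F

def MovesWith (k : Y) (x : X) : Prop := Moves F i j x ∧ k ∈ g x

def Swappable (x : X) : Prop := (x, i) ∈ F ∧ (x, j) ∈ F ∧ Separates i j g x

def Linked (u v : X) : Prop := MatchableAvoiding F g {i, j} {u, v}ᶜ

def switchSet (D : X → Prop) : Set X :=
  {x | Reaches (Swappable F i j g) (Linked F i j g) D x ∨
    (Moves F i j x ∧ Separates i j g x)}

noncomputable def switch [DecidableEq Y] (g : X → Finset Y) : X → Finset Y :=
  swapAt i j (switchSet F i j g (MovesWith F i j g j)) g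

variable {F i j g}

theorem mem_of_reaches [DecidableEq X] (hij : i ≠ j) (hnM : ¬ HasMatching F g) {v : X}
    (h : Reaches (Swappable F i j g) (Linked F i j g) (MovesWith F i j g j) v) : j ∈ g v := by
  have hstep : ∀ {u x}, Linked F i j g u x → Swappable F i j g u → (x, j) ∈ F → j ∈ g x →
      j ∈ g u := fun hL hu hx hjx => by_contra fun hju =>
    hnM (hL.hasMatching_of_pair hij hu.1 (hu.2.2.2 hju) hx hjx)
  induction h with
  | base hu hx hL => exact hstep hL hu hx.1.1 hx.2
  | step hv hL hu ih => exact hstep hL hv hu.prop.2.1 ih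

variable [DecidableEq Y]

theorem card_switch (x : X) : (switch F i j g x).card = (g x).card := card_swapAt x

theorem switchSet_swapAt {A : Set X} (D : X → Prop) :
    switchSet F i j (swapAt i j A g) D = switchSet F i j g D := by
  have hV : Swappable F i j (swapAt i j A g) = Swappable F i j g := by
    unfold Swappable; rw [separates_swapAt]
  have hR : Linked F i j (swapAt i j A g) = Linked F i j g := by
    unfold Linked; rw [matchableAvoiding_swapAt]
  unfold switchSet; rw [hV, hR, separates_swapAt]

theorem movesWith_switch : MovesWith F i j (switch F i j g) i = MovesWith F i j g j := by
  funext x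
  refine propext (and_congr_right fun hx => ?_)
  have hnR : ¬ Reaches (Swappable F i j g) (Linked F i j g) (MovesWith F i j g j) x :=
    fun h => hx.2 h.prop.1
  rw [switch, mem_swapAt, switchSet]
  split_ifs with hA
  · rw [Equiv.swap_apply_left]
  · simp only [Set.mem_ofPred_eq, hnR, false_or, not_and, Separates] at hA
    tauto

theorem swapAt_switch_switch :
    swapAt i j (switchSet F i j (switch F i j g) (MovesWith F i j (switch F i j g) i))
      (switch F i j g) = g := by
  rw [movesWith_switch, switch, switchSet_swapAt, swapAt_swapAt]

theorem switch_injective : Injective (switch F i j) := fun g₁ g₂ h => by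
  rw [← swapAt_switch_switch (g := g₁), ← swapAt_switch_switch (g := g₂), h]

end Switching

section Compression

variable [Fintype X] [Fintype Y] [DecidableEq X] [DecidableEq Y]
  {F : Finset (X × Y)} {i j : Y}

variable (F i j) in
noncomputable def compress : Finset (X × Y) :=
  {p | if Moves F i j p.1 then p.2 = i ∨ (p ∈ F ∧ p.2 ≠ j) else p ∈ F}

theorem mem_compress {x : X} {y : Y} :
    (x, y) ∈ compress F i j ↔
      if Moves F i j x then y = i ∨ ((x, y) ∈ F ∧ y ≠ j) else (x, y) ∈ F := by
  simp [compress]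

theorem mem_compress_left {x : X} : (x, i) ∈ compress F i j ↔ (x, i) ∈ F ∨ (x, j) ∈ F := by
  rw [mem_compress, Moves]; split_ifs <;> tauto

theorem mem_compress_right (hij : i ≠ j) {x : X} :
    (x, j) ∈ compress F i j ↔ (x, j) ∈ F ∧ (x, i) ∈ F := by
  rw [mem_compress, Moves]; split_ifs <;> simp_all [Ne.symm hij]

theorem mem_compress_of_ne {x : X} {y : Y} (hi : y ≠ i) (hj : y ≠ j) :
    (x, y) ∈ compress F i j ↔ (x, y) ∈ F := by
  rw [mem_compress]; split_ifs <;> tauto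

variable {g : X → Finset Y}

theorem of_mem_compress_right_of_mem_switch (hij : i ≠ j) (hnM : ¬ HasMatching F g) {x : X}
    (hF : (x, j) ∈ compress F i j) (hg : j ∈ switch F i j g x) :
    (x, j) ∈ F ∧ (x, i) ∈ F ∧ j ∈ g x ∧
      ¬ Reaches (Swappable F i j g) (Linked F i j g) (MovesWith F i j g j) x := by
  obtain ⟨hj, hi⟩ := (mem_compress_right hij).1 hF
  have hnR : ¬ Reaches (Swappable F i j g) (Linked F i j g) (MovesWith F i j g j) x := by
    intro hR
    have hx : x ∈ switchSet F i j g (MovesWith F i j g j) := Or.inl hR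
    rw [switch, mem_swapAt, if_pos hx, Equiv.swap_apply_right] at hg
    exact hR.prop.2.2.1 hg (mem_of_reaches hij hnM hR)
  have hx : x ∉ switchSet F i j g (MovesWith F i j g j) := fun hx =>
    hx.elim hnR fun hM => hM.1.2 hi
  rw [switch, mem_swapAt, if_neg hx] at hg
  exact ⟨hj, hi, hg, hnR⟩

theorem of_mem_compress_left_of_mem_switch {x : X} (hF : (x, i) ∈ compress F i j)
    (hg : i ∈ switch F i j g x) (hbad : ¬ ((x, i) ∈ F ∧ i ∈ g x)) :
    (x, j) ∈ F ∧ j ∈ g x ∧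
      (Reaches (Swappable F i j g) (Linked F i j g) (MovesWith F i j g j) x ∨
        MovesWith F i j g j x) := by
  rw [switch, mem_swapAt] at hg
  split_ifs at hg with hA
  · rw [Equiv.swap_apply_left] at hg
    rcases hA with hR | ⟨hM, -⟩
    · exact ⟨hR.prop.2.1, hg, Or.inl hR⟩
    · exact ⟨hM.1, hg, Or.inr ⟨hM, hg⟩⟩
  · have hi : (x, i) ∉ F := fun h => hbad ⟨h, hg⟩
    have hj : (x, j) ∈ F := (mem_compress_left.1 hF).resolve_left hi
    have hgj : j ∈ g x := by_contra fun h => hA (Or.inr ⟨⟨hj, hi⟩, iff_of_true hg h⟩)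
    exact ⟨hj, hgj, Or.inr ⟨⟨hj, hi⟩, hgj⟩⟩

theorem HasMatching.of_compress_switch (hij : i ≠ j)
    (h : HasMatching (compress F i j) (switch F i j g)) : HasMatching F g := by
  by_contra hnM
  obtain ⟨f, hf⟩ := h
  have hgood : ∀ z, f z ≠ i → (z, f z) ∈ F ∧ f z ∈ g z := by
    intro z hzi
    by_cases hzj : f z = j
    · have hF := (hf z).1; have hg := (hf z).2
      rw [hzj] at hF hg ⊢
      obtain ⟨h₁, -, h₃, -⟩ := of_mem_compress_right_of_mem_switch hij hnM hF hg
      exact ⟨h₁, h₃⟩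
    · exact ⟨(mem_compress_of_ne hzi hzj).1 (hf z).1, (mem_swapAt_of_ne hzi hzj).1 (hf z).2⟩
  obtain ⟨xi, hxi, hbad⟩ : ∃ xi, f xi = i ∧ ¬ ((xi, i) ∈ F ∧ i ∈ g xi) := by
    by_contra! h
    exact hnM ⟨f, fun z => if hz : f z = i then hz ▸ h z hz else hgood z hz⟩
  have hF := (hf xi).1; have hg := (hf xi).2
  rw [hxi] at hF hg
  obtain ⟨hxF, hxg, hxR⟩ := of_mem_compress_left_of_mem_switch hF hg hbad
  have hlink : ∀ u, (∀ z, f z = j → z = u) → Linked F i j g u xi := fun u hu =>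
    ⟨f, f.injective.injOn, fun z hz => by
      simp only [Set.mem_compl_iff, Set.mem_insert_iff, Set.mem_singleton_iff, not_or] at hz
      have hzi : f z ≠ i := fun h => hz.2 (f.injective (h.trans hxi.symm))
      have hzj : f z ≠ j := fun h => hz.1 (hu z h)
      exact ⟨(hgood z hzi).1, (hgood z hzi).2, by simp [hzi, hzj]⟩⟩
  by_cases hju : ∃ xj, f xj = j
  · obtain ⟨xj, hxj⟩ := hju
    have hF := (hf xj).1; have hg := (hf xj).2
    rw [hxj] at hF hg
    obtain ⟨hjF, hiF, hjg, hnR⟩ := of_mem_compress_right_of_mem_switch hij hnM hF hg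
    have hL := hlink xj fun z hz => f.injective (hz.trans hxj.symm)
    by_cases hig : i ∈ g xj
    · exact hnM (hL.hasMatching_of_pair hij hiF hig hxF hxg)
    · have hV : Swappable F i j g xj := ⟨hiF, hjF, iff_of_false hig (not_not.2 hjg)⟩
      exact hnR (hxR.elim (Reaches.step hV hL) fun hD => Reaches.base hV hD hL)
  · have hL := hlink xi fun z hz => absurd ⟨z, hz⟩ hju
    rw [Linked, Set.pair_eq_singleton] at hL
    exact hnM (hL.hasMatching_of_single (by simp) hxF hxg)

-- `HasMatching` is unfolded so that the decidability instance is the one of the theorem's count.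
variable (F) in
noncomputable def matchingCount (s : ℕ) : ℕ :=
  #{g : {g : X → Finset Y // ∀ x, #(g x) = s} |
    ∃ f : X ↪ Y, ∀ x, (x, f x) ∈ F ∧ f x ∈ g.1 x}

theorem matchingCount_compress_le (hij : i ≠ j) (s : ℕ) :
    matchingCount (compress F i j) s ≤ matchingCount F s := by
  let Φ (g : {g : X → Finset Y // ∀ x, #(g x) = s}) : {g : X → Finset Y // ∀ x, #(g x) = s} :=
    ⟨switch F i j g.1, fun x => (card_switch x).trans (g.2 x)⟩
  have hΦ : Surjective Φ := Finite.surjective_of_injective fun g₁ g₂ h =>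
    Subtype.ext (switch_injective (F := F) (i := i) (j := j) (congrArg Subtype.val h))
  unfold matchingCount
  refine card_le_card_of_surjOn Φ fun h hh => ?_
  obtain ⟨g, rfl⟩ := hΦ h
  simp only [coe_filter, mem_univ, true_and, Set.mem_ofPred_eq] at hh
  exact ⟨g, by simpa [HasMatching] using HasMatching.of_compress_switch hij hh, rfl⟩

end Compression

section Neighbourhood

variable [Fintype Y] [DecidableEq X] [DecidableEq Y]

def nbhd (E : Finset (X × Y)) (x : X) : Finset Y := {y | (x, y) ∈ E}

theorem mem_nbhd {E : Finset (X × Y)} {x : X} {y : Y} : y ∈ nbhd E x ↔ (x, y) ∈ E := by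
  simp [nbhd]

variable [Fintype X] {F : Finset (X × Y)} {i j : Y}

theorem nbhd_compress_of_moves {x : X} (hx : Moves F i j x) :
    nbhd (compress F i j) x = insert i ((nbhd F x).erase j) := by
  ext y
  rw [mem_nbhd, mem_compress, if_pos hx, mem_insert, mem_erase, mem_nbhd]
  tauto

theorem nbhd_compress_of_not_moves {x : X} (hx : ¬ Moves F i j x) :
    nbhd (compress F i j) x = nbhd F x := by
  ext y
  rw [mem_nbhd, mem_compress, if_neg hx, mem_nbhd]

theorem card_nbhd_compress (x : X) : #(nbhd (compress F i j) x) = #(nbhd F x) := by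
  by_cases hx : Moves F i j x
  · have hj : j ∈ nbhd F x := mem_nbhd.2 hx.1
    rw [nbhd_compress_of_moves hx,
      card_insert_of_notMem fun h => hx.2 (mem_nbhd.1 (mem_of_mem_erase h)),
      card_erase_add_one hj]
  · rw [nbhd_compress_of_not_moves hx]

end Neighbourhood

section Ordered

variable [Fintype X] [DecidableEq X] {N : ℕ}

def weight (E : Finset (X × Fin N)) : ℕ := ∑ x, ∑ y ∈ nbhd E x, (y : ℕ)

theorem weight_compress_lt {F : Finset (X × Fin N)} {i j : Fin N} (hij : i < j) {x₀ : X}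
    (hx₀ : Moves F i j x₀) : weight (compress F i j) < weight F := by
  have hrow : ∀ x, Moves F i j x →
      ∑ y ∈ nbhd (compress F i j) x, (y : ℕ) + j = ∑ y ∈ nbhd F x, (y : ℕ) + i := by
    intro x hx
    rw [nbhd_compress_of_moves hx,
      sum_insert fun h => hx.2 (mem_nbhd.1 (mem_of_mem_erase h)), add_assoc,
      sum_erase_add _ _ (mem_nbhd.2 hx.1), add_comm]
  have hij' : (i : ℕ) < j := hij
  refine sum_lt_sum (fun x _ => ?_) ⟨x₀, mem_univ _, by have := hrow x₀ hx₀; omega⟩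
  by_cases hx : Moves F i j x
  · have := hrow x hx; omega
  · rw [nbhd_compress_of_not_moves hx]

theorem Fin.eq_filter_lt_card_of_isLowerSet {S : Finset (Fin N)}
    (hS : IsLowerSet (S : Set (Fin N))) : S = ({y | (y : ℕ) < #S} : Finset (Fin N)) := by
  ext y
  rw [mem_filter, and_iff_right (mem_univ y)]
  constructor
  · intro hy
    have := card_le_card fun z hz => hS (mem_Iic.1 hz) hy
    rw [Fin.card_Iic] at this
    omega
  · intro hy
    by_contra hyS
    have := card_le_card fun z hz => mem_Iio.2 (lt_of_not_ge fun hyz => hyS (hS hyz hz))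
    rw [Fin.card_Iio] at this
    omega

variable (N) in
def leftAligned (d : X → ℕ) : Finset (X × Fin N) := {p | (p.2 : ℕ) < d p.1}

theorem matchingCount_leftAligned_le (s : ℕ) (d : X → ℕ) (F : Finset (X × Fin N))
    (hF : ∀ x, #(nbhd F x) = d x) : matchingCount (leftAligned N d) s ≤ matchingCount F s := by
  induction hw : weight F using Nat.strong_induction_on generalizing F with
  | _ w ih =>
  by_cases h : ∃ x, ∃ i j : Fin N, i < j ∧ Moves F i j x
  · obtain ⟨x, i, j, hij, hx⟩ := h
    calc _ ≤ matchingCount (compress F i j) s :=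
          ih _ (hw ▸ weight_compress_lt hij hx) _
            (fun x => (card_nbhd_compress x).trans (hF x)) rfl
      _ ≤ matchingCount F s := matchingCount_compress_le hij.ne s
  · have hlow : ∀ x, IsLowerSet (nbhd F x : Set (Fin N)) := fun x j i hij hj =>
      by_contra fun hi => h ⟨x, i, j, lt_of_le_of_ne hij fun h => hi (h ▸ hj), mem_nbhd.1 hj,
        fun h' => hi (mem_nbhd.2 h')⟩
    have : F = leftAligned N d := by
      ext ⟨x, y⟩
      rw [← mem_nbhd, Fin.eq_filter_lt_card_of_isLowerSet (hlow x), hF]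
      simp [leftAligned]
    rw [this]

end Ordered

end

theorem stmt6_general {X : Type*} [Fintype X] [DecidableEq X] (N : ℕ)
    (d : X → ℕ)
    (s : ℕ)
    -- the probability, over a uniform choice of `s`-subsets `L x ⊆ Y` (independently
    -- for each `x ∈ X`), that the graph `L ∩ E` has an `X`-perfect matching
    (Pm : Finset (X × Fin N) → ℝ)
    (hPm : ∀ E : Finset (X × Fin N), Pm E =
      ((Finset.univ.filter
          (fun g : {g : X → Finset (Fin N) // ∀ x, (g x).card = s} =>
            ∃ f : X ↪ Fin N, ∀ x, (x, f x) ∈ E ∧ f x ∈ g.1 x)).card : ℝ) /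
        (Fintype.card {g : X → Finset (Fin N) // ∀ x, (g x).card = s})) :
    ∀ F : Finset (X × Fin N),
      (∀ x : X, (Finset.univ.filter (fun y : Fin N => (x, y) ∈ F)).card = d x) →
      Pm (Finset.univ.filter (fun p : X × Fin N => (p.2 : ℕ) < d p.1)) ≤ Pm F := by
  intro F hF
  rw [hPm, hPm]
  exact div_le_div_of_nonneg_right
    (Nat.cast_le.2 (matchingCount_leftAligned_le s d F hF)) (Nat.cast_nonneg _)

/-- Among all bipartite graphs `F` on `X ∪ Y` (with `Y = Fin N` ordered) having prescribed
left degrees `d x`, the probability that `L ∩ F` admits an `X`-perfect matching — where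
`L` gives each `x ∈ X` an independent uniform `s`-subset of `Y` as neighborhood — is
minimized by the graph in which each `x` is joined to the first `d x` vertices of `Y`. -/
theorem stmt6 {X : Type*} [Fintype X] [DecidableEq X] (N : ℕ)
    (hXY : Fintype.card X ≤ N) (d : X → ℕ) (hd : ∀ x, d x ≤ N)
    (s : ℕ) (hs : s ≤ N)
    -- the probability, over a uniform choice of `s`-subsets `L x ⊆ Y` (independently
    -- for each `x ∈ X`), that the graph `L ∩ E` has an `X`-perfect matching
    (Pm : Finset (X × Fin N) → ℝ)
    (hPm : ∀ E : Finset (X × Fin N), Pm E =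
      ((Finset.univ.filter
          (fun g : {g : X → Finset (Fin N) // ∀ x, (g x).card = s} =>
            ∃ f : X ↪ Fin N, ∀ x, (x, f x) ∈ E ∧ f x ∈ g.1 x)).card : ℝ) /
        (Fintype.card {g : X → Finset (Fin N) // ∀ x, (g x).card = s})) :
    ∀ F : Finset (X × Fin N),
      (∀ x : X, (Finset.univ.filter (fun y : Fin N => (x, y) ∈ F)).card = d x) →
      Pm (Finset.univ.filter (fun p : X × Fin N => (p.2 : ℕ) < d p.1)) ≤ Pm F :=
  stmt6_general N d s Pm hPm
end

section
/- Let K be a bipartite graph on parts X and Y with |X| = J and |Y| = J + R for some R ≥ 0. If K has no X-perfect matching, then either (i) there exists Q ⊆ X with |Q| ≤ ⌈J/2⌉ and |N_K(Q)| < |Q|, or (ii) there exists Q ⊆ Y with 1 + R ≤ |Q| ≤ ⌊J/2⌋ + R and |N_K(Q)| < |Q| - R. -/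
open scoped Classical

/-- Deficiency reformulation of Hall's condition: if a bipartite graph `K` on parts `X`
(of size `J`) and `Y` (of size `J + R`, `R ≥ 0`) has no `X`-perfect matching, then either
some `Q ⊆ X` with `|Q| ≤ ⌈J/2⌉` has `|N_K(Q)| < |Q|`, or some `Q ⊆ Y` with
`1 + R ≤ |Q| ≤ ⌊J/2⌋ + R` has `|N_K(Q)| < |Q| - R`. -/
theorem stmt7 {X Y : Type*} [Fintype X] [Fintype Y] [DecidableEq X] [DecidableEq Y]
    (K : Finset (X × Y)) (J R : ℕ)
    (hX : Fintype.card X = J) (hY : Fintype.card Y = J + R)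
    (hnm : ¬ ∃ f : X ↪ Y, ∀ x, (x, f x) ∈ K) :
    (∃ Q : Finset X, Q.card ≤ (J + 1) / 2 ∧
        (Finset.univ.filter (fun y : Y => ∃ x ∈ Q, (x, y) ∈ K)).card < Q.card) ∨
    (∃ Q : Finset Y, 1 + R ≤ Q.card ∧ Q.card ≤ J / 2 + R ∧
        (Finset.univ.filter (fun x : X => ∃ y ∈ Q, (x, y) ∈ K)).card + R < Q.card) := by
  -- By Hall's theorem, there is a violating set Q ⊆ X.
  have hall := Fintype.all_card_le_filter_rel_iff_exists_injective
    (fun (x : X) (y : Y) => (x, y) ∈ K)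
  have hno : ¬ ∃ f : X → Y, Function.Injective f ∧ ∀ x, (x, f x) ∈ K := by
    rintro ⟨f, hf, hfK⟩
    exact hnm ⟨⟨f, hf⟩, hfK⟩
  rw [← hall] at hno
  push_neg at hno
  obtain ⟨Q, hQ⟩ := hno
  set N := (Finset.univ.filter (fun y : Y => ∃ x ∈ Q, (x, y) ∈ K)) with hN
  clear_value N
  have hQ' : N.card < Q.card := by
    convert hQ using 2
  by_cases hc : N.card + 1 ≤ (J + 1) / 2
  · -- shrink Q to size N.card + 1
    obtain ⟨Q₀, hQ₀sub, hQ₀card⟩ := Finset.exists_subset_card_eq (Nat.succ_le_of_lt hQ')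
    left
    refine ⟨Q₀, by omega, ?_⟩
    have hsub : (Finset.univ.filter (fun y : Y => ∃ x ∈ Q₀, (x, y) ∈ K)) ⊆ N := by
      intro y hy
      simp only [hN, Finset.mem_filter, Finset.mem_univ, true_and] at hy ⊢
      obtain ⟨x, hx, hxy⟩ := hy
      exact ⟨x, hQ₀sub hx, hxy⟩
    have h2 := Finset.card_le_card hsub
    omega
  · right
    push_neg at hc
    refine ⟨Finset.univ \ N, ?_, ?_, ?_⟩
    · have hNle : N.card ≤ Fintype.card Y := Finset.card_le_univ _
      have hQle : Q.card ≤ J := hX ▸ Finset.card_le_univ _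
      rw [Finset.card_sdiff_of_subset (Finset.subset_univ _), Finset.card_univ, hY]
      omega
    · rw [Finset.card_sdiff_of_subset (Finset.subset_univ _), Finset.card_univ, hY]
      omega
    · refine lt_of_le_of_lt (Nat.add_le_add_right
          (Finset.card_le_card (t := Finset.univ \ Q) ?_) R) ?_
      · intro x hx
        simp only [Finset.mem_filter, Finset.mem_univ, true_and, Finset.mem_sdiff] at hx ⊢
        obtain ⟨y, hy, hxy⟩ := hx
        intro hxQ
        apply hy
        rw [hN]
        simp only [Finset.mem_filter, Finset.mem_univ, true_and]
        exact ⟨x, hxQ, hxy⟩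
      · rw [Finset.card_sdiff_of_subset (Finset.subset_univ _), Finset.card_univ, hX,
          Finset.card_sdiff_of_subset (Finset.subset_univ _), Finset.card_univ, hY]
        have hNle : N.card ≤ J + R := hY ▸ Finset.card_le_univ _
        have hQle : Q.card ≤ J := hX ▸ Finset.card_le_univ _
        omega
end

section
/- Let K be a bipartite graph on X ∪ Y with |X| = J and |Y| = J + R that violates the condition: for all Q ⊆ Y with 1 + R ≤ |Q| ≤ ⌊J/2⌋ + R, |N_K(Q)| ≥ |Q| - R. Let I be the set of isolated vertices of Y in K. Then for any integer a ∈ [0, R+1], either |I| ≥ a, or there exist an integer u with 2 ≤ u ≤ J/2 and a set A ⊆ Y \ I with |A| = u + R - a + 1 and |N_K(A)| ≤ u - 1. -/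
open scoped Classical

/-- If a bipartite graph `K` on `X ∪ Y` (`|X| = J`, `|Y| = J + R`) violates the condition
"every `Q ⊆ Y` with `1 + R ≤ |Q| ≤ ⌊J/2⌋ + R` has `|N_K(Q)| ≥ |Q| - R`", and `I` is the
set of isolated vertices of `Y`, then for any `a ∈ [0, R + 1]` either `|I| ≥ a` or there
are `u ∈ [2, J/2]` and `A ⊆ Y \ I` with `|A| = u + R - a + 1` and `|N_K(A)| ≤ u - 1`. -/
theorem stmt8 {X Y : Type*} [Fintype X] [Fintype Y] [DecidableEq X] [DecidableEq Y]
    (K : Finset (X × Y)) (J R : ℕ)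
    (hX : Fintype.card X = J) (hY : Fintype.card Y = J + R)
    (hviol : ∃ Q : Finset Y, 1 + R ≤ Q.card ∧ Q.card ≤ J / 2 + R ∧
      (Finset.univ.filter (fun x : X => ∃ y ∈ Q, (x, y) ∈ K)).card + R < Q.card)
    (I : Finset Y)
    (hI : I = Finset.univ.filter (fun y : Y => ∀ x : X, (x, y) ∉ K))
    (a : ℕ) (ha : a ≤ R + 1) :
    a ≤ I.card ∨
    ∃ (u : ℕ) (A : Finset Y), 2 ≤ u ∧ 2 * u ≤ J ∧ A ⊆ Finset.univ \ I ∧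
      A.card + a = u + R + 1 ∧
      (Finset.univ.filter (fun x : X => ∃ y ∈ A, (x, y) ∈ K)).card ≤ u - 1 := by
  obtain ⟨Q, h1, h2, h3⟩ := hviol
  by_cases hIa : a ≤ I.card
  · exact Or.inl hIa
  push_neg at hIa
  right
  set n := (Finset.univ.filter (fun x : X => ∃ y ∈ Q, (x, y) ∈ K)).card with hn
  -- n ≥ 1
  have hn1 : 1 ≤ n := by
    by_contra h
    push_neg at h
    interval_cases n
    · have hQI : Q ⊆ I := by
        intro y hy
        rw [hI]
        simp only [Finset.mem_filter, Finset.mem_univ, true_and]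
        intro x hx
        have : x ∈ Finset.univ.filter (fun x : X => ∃ y ∈ Q, (x, y) ∈ K) := by
          simp only [Finset.mem_filter, Finset.mem_univ, true_and]
          exact ⟨y, hy, hx⟩
        have := Finset.card_pos.mpr ⟨x, this⟩
        omega
      have := Finset.card_le_card hQI
      omega
  -- pick A ⊆ Q \ I with card n + R + 2 - a
  have hcard : n + R + 2 - a ≤ (Q \ I).card := by
    have h4 : Q.card - I.card ≤ (Q \ I).card := Finset.le_card_sdiff I Q
    omega
  obtain ⟨A, hAsub, hAcard⟩ := Finset.exists_subset_card_eq hcard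
  refine ⟨n + 1, A, by omega, ?_, ?_, by omega, ?_⟩
  · omega
  · intro y hy
    have := hAsub hy
    simp only [Finset.mem_sdiff] at this ⊢
    exact ⟨Finset.mem_univ y, this.2⟩
  · have hsub : (Finset.univ.filter (fun x : X => ∃ y ∈ A, (x, y) ∈ K)) ⊆
        (Finset.univ.filter (fun x : X => ∃ y ∈ Q, (x, y) ∈ K)) := by
      intro x hx
      simp only [Finset.mem_filter, Finset.mem_univ, true_and] at hx ⊢
      obtain ⟨y, hy, hxy⟩ := hx
      exact ⟨y, (Finset.mem_sdiff.mp (hAsub hy)).1, hxy⟩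
    have := Finset.card_le_card hsub
    omega
end

section
/- Let H be a bipartite graph on X ∪ Y, fix distinct s, t ∈ X, and suppose M_1 is a matching of H - {x, y} saturating X \ {x, y} and M_2 is a matching of H - {w, z} saturating X \ {w, z}, where x, y, w, z ∈ X are distinct. Then at least one of the pairs {x, w}, {x, z}, {y, w}, {y, z} is 'exposable', i.e., H minus that pair contains a matching saturating the remaining vertices of X. -/
/-- In a bipartite graph `H` on `X ∪ Y`, the pair `{s, t} ⊆ X` is *exposable* if
`H - {s, t}` has a matching saturating `X \ {s, t}`. -/
def Exposable {X Y : Type*} (H : Finset (X × Y)) (s t : X) : Prop :=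
  ∃ f : X → Y, Set.InjOn f {x : X | x ≠ s ∧ x ≠ t} ∧
    ∀ x : X, x ≠ s → x ≠ t → (x, f x) ∈ H

/-!
Let `f` witness that `{x, y}` is exposable and `g` that `{w, z}` is. Starting at `w`, follow the
alternating path `u ⟶ v` where `g v = f u`, i.e. leave `u` along its `f`-edge and come back along
the `g`-edge at the same vertex of `Y`. Since `g` is injective the path is determined by `w`, and it
stops at `x` or `y`, which have no `f`-edge; so it cannot reach both of them, say it misses `y`.
Using `f` on the vertices reached and `g` elsewhere exposes `{x, z}`: `w` is covered by `f`, and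
no `f`-edge taken on the path clashes with a `g`-edge used off it.
-/

open Set Relation

theorem Set.InjOn.piecewise_of_forall_ne {α β : Type*} {s D : Set α} {f g : α → β}
    [∀ a, Decidable (a ∈ s)]
    (hf : InjOn f (D ∩ s)) (hg : InjOn g (D \ s)) (hfg : ∀ a ∈ D ∩ s, ∀ b ∈ D \ s, f a ≠ g b) :
    InjOn (s.piecewise f g) D := by
  intro a ha b hb hab
  by_cases has : a ∈ s <;> by_cases hbs : b ∈ s <;>
    simp only [piecewise_eq_of_mem, piecewise_eq_of_notMem, has, hbs, not_false_eq_true] at hab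
  · exact hf ⟨ha, has⟩ ⟨hb, hbs⟩ hab
  · exact absurd hab (hfg a ⟨ha, has⟩ b ⟨hb, hbs⟩)
  · exact absurd hab.symm (hfg b ⟨hb, hbs⟩ a ⟨ha, has⟩)
  · exact hg ⟨ha, has⟩ ⟨hb, hbs⟩ hab

section

variable {X Y : Type*} {H : Finset (X × Y)}

def AltStep (f g : X → Y) (x y w z u v : X) : Prop :=
  u ≠ x ∧ u ≠ y ∧ v ≠ w ∧ v ≠ z ∧ g v = f u

theorem altStep_comm (f g : X → Y) (x y w z : X) :
    AltStep f g x y w z = AltStep f g y x w z := by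
  ext u v
  exact and_left_comm

theorem AltStep.rightUnique {f g : X → Y} {x y w z : X}
    (hg : InjOn g {u | u ≠ w ∧ u ≠ z}) : Relator.RightUnique (AltStep f g x y w z) :=
  fun _ _ _ ⟨_, _, hbw, hbz, hb⟩ ⟨_, _, hcw, hcz, hc⟩ => hg ⟨hbw, hbz⟩ ⟨hcw, hcz⟩ (hb.trans hc.symm)

/-- The walk from `w` is deterministic and `x`, `y` are dead ends of it. -/
theorem not_reflTransGen_altStep_and {f g : X → Y} {x y w z : X} (hxy : x ≠ y)
    (hg : InjOn g {u | u ≠ w ∧ u ≠ z}) :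
    ¬ (ReflTransGen (AltStep f g x y w z) w x ∧ ReflTransGen (AltStep f g x y w z) w y) := by
  rintro ⟨hx, hy⟩
  rcases ReflTransGen.total_of_right_unique (AltStep.rightUnique hg) hx hy with h | h
  · rcases h.cases_head with h | ⟨_, ⟨hxx, _⟩, _⟩
    exacts [hxy h, hxx rfl]
  · rcases h.cases_head with h | ⟨_, ⟨_, hyy, _⟩, _⟩
    exacts [hxy h.symm, hyy rfl]

theorem exposable_of_not_reflTransGen_altStep {x y w z : X} {f g : X → Y}
    (hf : InjOn f {u | u ≠ x ∧ u ≠ y}) (hfH : ∀ u, u ≠ x → u ≠ y → (u, f u) ∈ H)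
    (hg : InjOn g {u | u ≠ w ∧ u ≠ z}) (hgH : ∀ u, u ≠ w → u ≠ z → (u, g u) ∈ H)
    (hy : ¬ ReflTransGen (AltStep f g x y w z) w y) :
    Exposable H x z := by
  classical
  set S := {u | ReflTransGen (AltStep f g x y w z) w u}
  have hSy : ∀ u ∈ S, u ≠ y := fun u hu h => hy (by rwa [h] at hu)
  have hSw : ∀ u ∉ S, u ≠ w := fun u hu h => hu (h ▸ ReflTransGen.refl)
  refine ⟨S.piecewise f g, InjOn.piecewise_of_forall_ne ?_ ?_ ?_, fun u hux huz => ?_⟩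
  · exact hf.mono fun u hu => show u ≠ x ∧ u ≠ y from ⟨hu.1.1, hSy u hu.2⟩
  · exact hg.mono fun u hu => show u ≠ w ∧ u ≠ z from ⟨hSw u hu.2, hu.1.2⟩
  · rintro u ⟨⟨hux, _⟩, huS⟩ v ⟨⟨_, hvz⟩, hvS⟩ huv
    exact hvS (huS.tail ⟨hux, hSy u huS, hSw v hvS, hvz, huv.symm⟩)
  · by_cases huS : u ∈ S
    · simpa [huS] using hfH u hux (hSy u huS)
    · simpa [huS] using hgH u (hSw u huS) huz

end

theorem stmt9_general {X Y : Type*}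
    (H : Finset (X × Y)) (x y w z : X)
    (hxy : x ≠ y)
    (h1 : Exposable H x y) (h2 : Exposable H w z) :
    Exposable H x w ∨ Exposable H x z ∨ Exposable H y w ∨ Exposable H y z := by
  obtain ⟨f, hf, hfH⟩ := h1
  obtain ⟨g, hg, hgH⟩ := h2
  by_cases hy : ReflTransGen (AltStep f g x y w z) w y
  · have hx : ¬ ReflTransGen (AltStep f g y x w z) w x := by
      rw [← altStep_comm]
      exact fun hx => not_reflTransGen_altStep_and hxy hg ⟨hx, hy⟩
    have hf' : InjOn f {u | u ≠ y ∧ u ≠ x} := fun u hu v hv => hf ⟨hu.2, hu.1⟩ ⟨hv.2, hv.1⟩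
    exact Or.inr <| Or.inr <| Or.inr <| exposable_of_not_reflTransGen_altStep hf'
      (fun u hy hx => hfH u hx hy) hg hgH hx
  · exact Or.inr <| Or.inl <| exposable_of_not_reflTransGen_altStep hf hfH hg hgH hy

/-- If `x, y, w, z ∈ X` are distinct and both `{x, y}` and `{w, z}` are exposable in a
bipartite graph `H` on `X ∪ Y`, then at least one of the cross pairs
`{x, w}, {x, z}, {y, w}, {y, z}` is exposable. -/
theorem stmt9 {X Y : Type*} [Fintype X] [Fintype Y] [DecidableEq X] [DecidableEq Y]
    (H : Finset (X × Y)) (x y w z : X)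
    (hxy : x ≠ y) (hxw : x ≠ w) (hxz : x ≠ z) (hyw : y ≠ w) (hyz : y ≠ z) (hwz : w ≠ z)
    (h1 : Exposable H x y) (h2 : Exposable H w z) :
    Exposable H x w ∨ Exposable H x z ∨ Exposable H y w ∨ Exposable H y z :=
  stmt9_general H x y w z hxy h1 h2
end

section
/- Let S be a finite set and A_1, ..., A_m ⊆ S. For the p-random subset S_p of S (each element included independently with probability p), let E_i be the event {A_i ⊆ S_p}, μ = Σ_i P(E_i), and Δ̄ = ΣΣ{P(E_i ∩ E_j) : A_i ∩ A_j ≠ ∅} (including diagonal terms i = j). Then P(no E_i occurs) ≤ exp[-μ²/Δ̄]. -/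
open scoped Classical

/-!
Let `X` count the events `E_i` that occur and `Z s = 𝔼[e^{-sX}]`, so that
`P(X = 0) ≤ Z s` for every `s ≥ 0`. Now `-Z' s = ∑ i 𝔼[1_{E_i} e^{-sX}]`, and conditioning on `E_i`
amounts to replacing `S_p` by `S_p ∪ A_i`. Splitting `X` into the events whose sets meet `A_i` and
the others (which do not see the conditioning), the Harris inequality decorrelates the two parts and
Jensen's inequality, applied twice, gives `-Z' s ≥ μ e^{-sΔ̄/μ} Z s`. Integrating,
`Z s ≤ exp (-(μ²/Δ̄) (1 - e^{-sΔ̄/μ}))`, and letting `s → ∞` proves the bound.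
-/

open Finset Real Filter Topology

lemma sum_mul_exp_div_le {ι : Type*} (t : Finset ι) (w x : ι → ℝ) (hw : ∀ i ∈ t, 0 ≤ w i)
    (hW : 0 < ∑ i ∈ t, w i) :
    (∑ i ∈ t, w i) * exp ((∑ i ∈ t, w i * x i) / ∑ i ∈ t, w i) ≤ ∑ i ∈ t, w i * exp (x i) := by
  have h := convexOn_exp.map_centerMass_le (p := x) hw hW fun _ _ => Set.mem_univ _
  simp only [centerMass, smul_eq_mul, Function.comp_apply, ← div_eq_inv_mul] at h
  calc (∑ i ∈ t, w i) * exp ((∑ i ∈ t, w i * x i) / ∑ i ∈ t, w i)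
      ≤ (∑ i ∈ t, w i) * ((∑ i ∈ t, w i * exp (x i)) / ∑ i ∈ t, w i) :=
        mul_le_mul_of_nonneg_left h hW.le
    _ = ∑ i ∈ t, w i * exp (x i) := mul_div_cancel₀ _ hW.ne'

lemma antitoneOn_mul_exp {f f' F F' : ℝ → ℝ} (hf : ∀ s, HasDerivAt f (f' s) s)
    (hF : ∀ s, HasDerivAt F (F' s) s) (h : ∀ s, 0 < s → f' s + F' s * f s ≤ 0) :
    AntitoneOn (fun s => f s * exp (F s)) (Set.Ici 0) := by
  have hd (s : ℝ) : HasDerivAt (fun s => f s * exp (F s)) (exp (F s) * (f' s + F' s * f s)) s :=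
    ((hf s).mul (hF s).exp).congr_deriv (by ring)
  refine antitoneOn_of_deriv_nonpos (convex_Ici 0)
    (fun s _ => (hd s).continuousAt.continuousWithinAt)
    (fun s _ => (hd s).differentiableAt.differentiableWithinAt) fun s hs => ?_
  rw [interior_Ici] at hs
  rw [(hd s).deriv]
  exact mul_nonpos_of_nonneg_of_nonpos (exp_pos _).le (h s hs)

namespace RandomSubset

section

variable {S : Type*} [Fintype S] [DecidableEq S] {p : ℝ}

noncomputable def weight (p : ℝ) (T : Finset S) : ℝ := p ^ #T * (1 - p) ^ #Tᶜ

noncomputable def expect (p : ℝ) (f : Finset S → ℝ) : ℝ := ∑ T, weight p T * f T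

noncomputable def prob (p : ℝ) (E : Finset S → Prop) : ℝ := expect p fun T => if E T then 1 else 0

lemma weight_nonneg (hp₀ : 0 ≤ p) (hp₁ : p ≤ 1) (T : Finset S) : 0 ≤ weight p T := by
  have : 0 ≤ 1 - p := by linarith
  unfold weight
  positivity

lemma sum_weight (p : ℝ) : ∑ T : Finset S, weight p T = 1 := by
  simp only [weight, card_compl, Fintype.sum_pow_mul_eq_add_pow, add_sub_cancel, one_pow]

lemma weight_mul_weight (p : ℝ) (a b : Finset S) :
    weight p a * weight p b = weight p (a ∩ b) * weight p (a ∪ b) := by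
  have h₁ := card_inter_add_card_union a b
  have h₂ := card_inter_add_card_union aᶜ bᶜ
  rw [← compl_union, ← compl_inter] at h₂
  calc weight p a * weight p b = p ^ (#a + #b) * (1 - p) ^ (#aᶜ + #bᶜ) := by
        simp only [weight]; ring
    _ = _ := by rw [← h₁, ← h₂, weight, weight]; ring

lemma weight_insert (p : ℝ) {x : S} {T : Finset S} (hx : x ∉ T) :
    p * (weight p T + weight p (insert x T)) = weight p (insert x T) := by
  have h : #Tᶜ = #(insert x T)ᶜ + 1 := by
    rw [compl_insert, card_erase_add_one (mem_compl.2 hx)]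
  simp only [weight, card_insert_of_notMem hx, h]
  ring

lemma expect_nonneg (hp₀ : 0 ≤ p) (hp₁ : p ≤ 1) {f : Finset S → ℝ} (hf : ∀ T, 0 ≤ f T) :
    0 ≤ expect p f :=
  sum_nonneg fun T _ => mul_nonneg (weight_nonneg hp₀ hp₁ T) (hf T)

lemma expect_mono (hp₀ : 0 ≤ p) (hp₁ : p ≤ 1) {f g : Finset S → ℝ} (h : ∀ T, f T ≤ g T) :
    expect p f ≤ expect p g :=
  sum_le_sum fun T _ => mul_le_mul_of_nonneg_left (h T) (weight_nonneg hp₀ hp₁ T)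

lemma expect_const (p c : ℝ) : expect p (fun _ : Finset S => c) = c := by
  rw [expect, ← sum_mul, sum_weight, one_mul]

lemma expect_sum {ι : Type*} (t : Finset ι) (f : ι → Finset S → ℝ) :
    expect p (fun T => ∑ i ∈ t, f i T) = ∑ i ∈ t, expect p (f i) := by
  simp only [expect, mul_sum]
  exact sum_comm

lemma expect_const_mul (p c : ℝ) (f : Finset S → ℝ) :
    expect p (fun T => c * f T) = c * expect p f := by
  simp only [expect, mul_sum, mul_left_comm]

lemma prob_eq_expect (E : Finset S → Prop) [DecidablePred E] :
    prob p E = expect p fun T => if E T then 1 else 0 := by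
  unfold prob
  congr!

lemma prob_nonneg (hp₀ : 0 ≤ p) (hp₁ : p ≤ 1) (E : Finset S → Prop) : 0 ≤ prob p E :=
  expect_nonneg hp₀ hp₁ fun T => by split_ifs <;> norm_num

lemma prob_le_one (hp₀ : 0 ≤ p) (hp₁ : p ≤ 1) (E : Finset S → Prop) : prob p E ≤ 1 :=
  (expect_mono hp₀ hp₁ fun T => by split_ifs <;> norm_num).trans_eq (expect_const p 1)

lemma expect_ite_mem (p : ℝ) (x : S) (h : Finset S → ℝ) :
    expect p (fun T => if x ∈ T then h T else 0) = p * expect p fun T => h (insert x T) := by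
  have hx : x ∉ univ.erase x := notMem_erase x univ
  simp only [expect, ← powerset_univ]
  rw [← insert_erase (mem_univ x), sum_powerset_insert hx, sum_powerset_insert hx, mul_add,
    mul_sum, mul_sum, ← sum_add_distrib, ← sum_add_distrib]
  refine sum_congr rfl fun T hT => ?_
  have hxT : x ∉ T := fun h => hx (mem_powerset.1 hT h)
  simp only [if_neg hxT, mem_insert_self, if_true, insert_idem, mul_zero, zero_add]
  linear_combination -h (insert x T) * weight_insert p hxT

lemma expect_ite_subset (p : ℝ) (A : Finset S) (h : Finset S → ℝ) :
    expect p (fun T => if A ⊆ T then h T else 0) = p ^ #A * expect p fun T => h (T ∪ A) := by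
  induction A using Finset.induction_on generalizing h with
  | empty => simp
  | insert x A hx ih =>
    calc expect p (fun T => if insert x A ⊆ T then h T else 0)
        = expect p (fun T => if x ∈ T then (if A ⊆ T then h T else 0) else 0) := by
          simp only [insert_subset_iff, ite_and]
      _ = p * expect p (fun T => if A ⊆ T then h (insert x T) else 0) := by
          simp only [expect_ite_mem, subset_insert_iff_of_notMem hx]
      _ = p ^ #(insert x A) * expect p fun T => h (T ∪ insert x A) := by
          rw [ih, card_insert_of_notMem hx, pow_succ]
          simp only [union_insert]
          ring

lemma prob_subset (p : ℝ) (A : Finset S) : prob p (fun T => A ⊆ T) = p ^ #A := by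
  rw [prob_eq_expect, expect_ite_subset, expect_const, mul_one]

lemma expect_mul_expect_le_expect_mul (hp₀ : 0 ≤ p) (hp₁ : p ≤ 1) {f g : Finset S → ℝ}
    (hf₀ : 0 ≤ f) (hg₀ : 0 ≤ g) (hf : Antitone f) (hg : Antitone g) :
    expect p f * expect p g ≤ expect p (f * g) := by
  have h := fkg (α := (Finset S)ᵒᵈ) _ _ (weight p ∘ OrderDual.ofDual)
    (fun T => weight_nonneg hp₀ hp₁ _) hf₀ hg₀ hf.dual_left hg.dual_left
    (fun a b => (weight_mul_weight p _ _).trans_le (mul_comm _ _).le)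
  rw [Function.comp_def, show ∑ T : (Finset S)ᵒᵈ, weight p (OrderDual.ofDual T) = 1 from
    sum_weight p, one_mul] at h
  exact h

lemma exp_expect_le (hp₀ : 0 ≤ p) (hp₁ : p ≤ 1) (f : Finset S → ℝ) :
    exp (expect p f) ≤ expect p fun T => exp (f T) :=
  convexOn_exp.map_sum_le (fun T _ => weight_nonneg hp₀ hp₁ T) (sum_weight p)
    (fun _ _ => Set.mem_univ _)

lemma hasDerivAt_expect_exp (p : ℝ) (X : Finset S → ℝ) (s : ℝ) :
    HasDerivAt (fun s => expect p fun T => exp (-s * X T))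
      (-expect p fun T => X T * exp (-s * X T)) s := by
  have h (T : Finset S) : HasDerivAt (fun s => weight p T * exp (-s * X T))
      (-(weight p T * (X T * exp (-s * X T)))) s := by
    refine ((((hasDerivAt_neg s).mul_const (X T)).exp).const_mul _).congr_deriv ?_
    ring
  simpa only [expect, sum_neg_distrib] using HasDerivAt.fun_sum fun T (_ : T ∈ univ) => h T

end

section

variable {S ι : Type*} [DecidableEq S]

noncomputable def count (A : ι → Finset S) (J : Finset ι) (T : Finset S) : ℝ :=
  ∑ j ∈ J, if A j ⊆ T then 1 else 0

lemma count_nonneg (A : ι → Finset S) (J : Finset ι) (T : Finset S) : 0 ≤ count A J T :=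
  sum_nonneg fun j _ => by split_ifs <;> norm_num

lemma count_mono (A : ι → Finset S) (J : Finset ι) : Monotone (count A J) := fun T U hTU =>
  sum_le_sum fun j _ => by
    split_ifs with h₁ h₂ <;> first | exact absurd (h₁.trans hTU) h₂ | norm_num

lemma count_union_of_disjoint {A : ι → Finset S} {J : Finset ι} {B : Finset S}
    (h : ∀ j ∈ J, Disjoint (A j) B) (T : Finset S) : count A J (T ∪ B) = count A J T :=
  sum_congr rfl fun j hj => by
    have : A j ⊆ T ∪ B ↔ A j ⊆ T :=
      ⟨fun hT => (h j hj).left_le_of_le_sup_right hT, fun hT => hT.trans subset_union_left⟩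
    simp only [this]

def neighbours [Fintype ι] (A : ι → Finset S) (i : ι) : Finset ι :=
  {j | (A i ∩ A j).Nonempty}

end

variable {S ι : Type*} [Fintype S] [DecidableEq S] [Fintype ι] {p : ℝ}

noncomputable def expectedCount (p : ℝ) (A : ι → Finset S) : ℝ :=
  ∑ i, prob p fun T => A i ⊆ T

noncomputable def jansonDelta (p : ℝ) (A : ι → Finset S) : ℝ :=
  ∑ i, ∑ j, if (A i ∩ A j).Nonempty then prob p (fun T => A i ⊆ T ∧ A j ⊆ T) else 0

lemma expectedCount_nonneg (hp₀ : 0 ≤ p) (hp₁ : p ≤ 1) (A : ι → Finset S) :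
    0 ≤ expectedCount p A :=
  sum_nonneg fun _ _ => prob_nonneg hp₀ hp₁ _

lemma jansonDelta_nonneg (hp₀ : 0 ≤ p) (hp₁ : p ≤ 1) (A : ι → Finset S) :
    0 ≤ jansonDelta p A :=
  sum_nonneg fun _ _ => sum_nonneg fun _ _ => by
    split_ifs
    exacts [prob_nonneg hp₀ hp₁ _, le_rfl]

lemma sum_pow_card_mul_expect_count_neighbours (p : ℝ) (A : ι → Finset S) :
    ∑ i, p ^ #(A i) * expect p (fun T => count A (neighbours A i) (T ∪ A i)) =
      jansonDelta p A := by
  refine sum_congr rfl fun i _ => ?_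
  rw [← expect_ite_subset, ← sum_filter]
  simp only [prob_eq_expect, ← expect_sum]
  congr 1 with T
  split_ifs with h <;> simp [count, neighbours, h]

lemma pow_card_mul_exp_mul_le (hp₀ : 0 ≤ p) (hp₁ : p ≤ 1) (A : ι → Finset S) (i : ι) {s : ℝ}
    (hs : 0 ≤ s) :
    p ^ #(A i) * exp (-s * expect p fun T => count A (neighbours A i) (T ∪ A i)) *
        expect p (fun T => exp (-s * count A univ T)) ≤
      expect p fun T => if A i ⊆ T then exp (-s * count A univ T) else 0 := by
  set Y := count A (neighbours A i)
  set W := count A {j | ¬(A i ∩ A j).Nonempty}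
  have hsplit (T : Finset S) : count A univ T = Y T + W T :=
    (sum_filter_add_sum_filter_not _ _ _).symm
  have hW (T : Finset S) : W (T ∪ A i) = W T :=
    count_union_of_disjoint (fun j hj => by
      simpa [disjoint_comm, ← not_disjoint_iff_nonempty_inter] using hj) T
  have hanti {X : Finset S → ℝ} (hX : Monotone X) : Antitone fun T => exp (-s * X T) :=
    fun T U hTU => exp_le_exp.2 (by nlinarith [hX hTU])
  rw [expect_ite_subset, mul_assoc]
  refine mul_le_mul_of_nonneg_left ?_ (pow_nonneg hp₀ _)
  calc exp (-s * expect p fun T => Y (T ∪ A i)) * expect p (fun T => exp (-s * count A univ T))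
      ≤ (expect p fun T => exp (-s * Y (T ∪ A i))) * expect p fun T => exp (-s * W T) := by
        refine mul_le_mul ?_ ?_ (expect_nonneg hp₀ hp₁ fun T => (exp_pos _).le)
          (expect_nonneg hp₀ hp₁ fun T => (exp_pos _).le)
        · rw [← expect_const_mul]
          exact exp_expect_le hp₀ hp₁ _
        · exact expect_mono hp₀ hp₁ fun T => exp_le_exp.2 (by
            nlinarith [hsplit T, count_nonneg A (neighbours A i) T])
    _ ≤ expect p fun T => exp (-s * Y (T ∪ A i)) * exp (-s * W T) :=
        expect_mul_expect_le_expect_mul hp₀ hp₁ (fun T => (exp_pos _).le)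
          (fun T => (exp_pos _).le)
          (hanti ((count_mono A _).comp fun _ _ h => union_subset_union_left h))
          (hanti (count_mono A _))
    _ = expect p fun T => exp (-s * count A univ (T ∪ A i)) := by
        simp only [hsplit, hW, ← exp_add, mul_add]

lemma expectedCount_mul_exp_mul_le (hp₀ : 0 ≤ p) (hp₁ : p ≤ 1) (A : ι → Finset S)
    (hμ : 0 < expectedCount p A) {s : ℝ} (hs : 0 ≤ s) :
    expectedCount p A * exp (-s * (jansonDelta p A / expectedCount p A)) *
        expect p (fun T => exp (-s * count A univ T)) ≤
      expect p fun T => count A univ T * exp (-s * count A univ T) := by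
  set m := fun i => expect p fun T => count A (neighbours A i) (T ∪ A i)
  have hμ_eq : expectedCount p A = ∑ i, p ^ #(A i) := sum_congr rfl fun i _ => prob_subset p _
  have hmean : (∑ i, p ^ #(A i) * (-s * m i)) / ∑ i, p ^ #(A i) =
      -s * (jansonDelta p A / expectedCount p A) := by
    simp only [← sum_pow_card_mul_expect_count_neighbours, hμ_eq, mul_left_comm _ (-s), ← mul_sum,
      mul_div_assoc, m]
  have hjensen := sum_mul_exp_div_le univ (fun i => p ^ #(A i)) (fun i => -s * m i)
    (fun i _ => pow_nonneg hp₀ _) (hμ_eq ▸ hμ)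
  rw [hmean, ← hμ_eq] at hjensen
  calc expectedCount p A * exp (-s * (jansonDelta p A / expectedCount p A)) *
        expect p (fun T => exp (-s * count A univ T))
      ≤ ∑ i, p ^ #(A i) * exp (-s * m i) * expect p (fun T => exp (-s * count A univ T)) := by
        rw [← sum_mul]
        exact mul_le_mul_of_nonneg_right hjensen (expect_nonneg hp₀ hp₁ fun T => (exp_pos _).le)
    _ ≤ ∑ i, expect p fun T => if A i ⊆ T then exp (-s * count A univ T) else 0 :=
        sum_le_sum fun i _ => pow_card_mul_exp_mul_le hp₀ hp₁ A i hs
    _ = expect p fun T => count A univ T * exp (-s * count A univ T) := by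
        rw [← expect_sum]
        simp only [count, sum_mul, ite_mul, one_mul, zero_mul]

lemma prob_forall_not_subset_le_expect_exp (hp₀ : 0 ≤ p) (hp₁ : p ≤ 1) (A : ι → Finset S)
    (s : ℝ) : prob p (fun T => ∀ i, ¬A i ⊆ T) ≤ expect p fun T => exp (-s * count A univ T) := by
  refine expect_mono hp₀ hp₁ fun T => ?_
  split_ifs with h
  · simp [count, h]
  · exact (exp_pos _).le

theorem prob_forall_not_subset_le (hp₀ : 0 ≤ p) (hp₁ : p ≤ 1) (A : ι → Finset S)
    (hμ : 0 < expectedCount p A) (hΔ : 0 < jansonDelta p A) :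
    prob p (fun T => ∀ i, ¬A i ⊆ T) ≤ exp (-(expectedCount p A ^ 2 / jansonDelta p A)) := by
  set μ := expectedCount p A
  set c := jansonDelta p A / μ
  set L := μ ^ 2 / jansonDelta p A
  set Z := fun s => expect p fun T => exp (-s * count A univ T)
  have hLc : L * c = μ := by
    simp only [L, c]
    field_simp
  have hF (s : ℝ) : HasDerivAt (fun s => -L * exp (-s * c)) (μ * exp (-s * c)) s :=
    (((hasDerivAt_neg s).mul_const c).exp.const_mul (-L)).congr_deriv (by rw [← hLc]; ring)
  have hanti := antitoneOn_mul_exp (hasDerivAt_expect_exp p (count A univ)) hF fun s hs => by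
    nlinarith [expectedCount_mul_exp_mul_le hp₀ hp₁ A hμ hs.le]
  have hbound (s : ℝ) (hs : 0 ≤ s) :
      prob p (fun T => ∀ i, ¬A i ⊆ T) ≤ exp (-L + L * exp (-s * c)) :=
    calc prob p (fun T => ∀ i, ¬A i ⊆ T)
          ≤ Z s * exp (-L * exp (-s * c)) * exp (L * exp (-s * c)) := by
          rw [mul_assoc, ← exp_add, neg_mul, neg_add_cancel, exp_zero, mul_one]
          exact prob_forall_not_subset_le_expect_exp hp₀ hp₁ A s
      _ ≤ Z 0 * exp (-L * exp (-0 * c)) * exp (L * exp (-s * c)) :=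
          mul_le_mul_of_nonneg_right (hanti Set.self_mem_Ici hs hs) (exp_pos _).le
      _ = exp (-L + L * exp (-s * c)) := by
          simp [Z, expect_const, exp_add]
  have hc : 0 < c := div_pos hΔ hμ
  have hlim : Tendsto (fun s => exp (-L + L * exp (-s * c))) atTop (𝓝 (exp (-L))) := by
    have h := tendsto_exp_neg_atTop_nhds_zero.comp (tendsto_id.atTop_mul_const hc)
    simpa using ((h.const_mul L).const_add (-L)).rexp
  exact ge_of_tendsto hlim (eventually_ge_atTop 0 |>.mono hbound)

end RandomSubset

/-- Janson's inequality (simplest form): for subsets `A₁, …, A_m` of a finite set `S` and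
the `p`-random subset `S_p`, with `E_i = {A_i ⊆ S_p}`, `μ = Σ P(E_i)` and
`Δ̄ = ΣΣ {P(E_i ∩ E_j) : A_i ∩ A_j ≠ ∅}` (including the diagonal),
`P(no E_i occurs) ≤ exp(-μ²/Δ̄)`. -/
theorem stmt13 {S : Type*} [Fintype S] [DecidableEq S]
    (p : ℝ) (hp0 : 0 ≤ p) (hp1 : p ≤ 1) (m : ℕ) (A : Fin m → Finset S)
    -- probability of an event for the `p`-random subset of `S`
    (Pr : (Finset S → Prop) → ℝ)
    (hPr : ∀ E : Finset S → Prop, Pr E =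
      ∑ T : Finset S, (if E T then p ^ T.card * (1 - p) ^ (Fintype.card S - T.card) else 0))
    (μ Δbar : ℝ)
    (hμ : μ = ∑ i : Fin m, Pr (fun T => A i ⊆ T))
    (hΔ : Δbar = ∑ i : Fin m, ∑ j : Fin m,
      (if (A i ∩ A j).Nonempty then Pr (fun T => A i ⊆ T ∧ A j ⊆ T) else 0)) :
    Pr (fun T => ∀ i : Fin m, ¬ A i ⊆ T) ≤ Real.exp (-(μ ^ 2 / Δbar)) := by
  obtain rfl : Pr = RandomSubset.prob p := funext fun E => by
    simp [hPr, RandomSubset.prob, RandomSubset.expect, RandomSubset.weight, card_compl]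
  obtain rfl : μ = RandomSubset.expectedCount p A := hμ
  obtain rfl : Δbar = RandomSubset.jansonDelta p A := hΔ
  rcases (RandomSubset.expectedCount_nonneg hp0 hp1 A).eq_or_lt with hμ0 | hμ0
  · simpa [← hμ0] using RandomSubset.prob_le_one hp0 hp1 _
  rcases (RandomSubset.jansonDelta_nonneg hp0 hp1 A).eq_or_lt with hΔ0 | hΔ0
  · simpa [← hΔ0] using RandomSubset.prob_le_one hp0 hp1 _
  exact RandomSubset.prob_forall_not_subset_le hp0 hp1 A hμ0 hΔ0
end

section
/- Let B be a bipartite graph on X ∪ Y with |X| = J and |Y| = J + R, and suppose each v ∈ X independently receives a uniform t-subset M_v of Y; let K be the subgraph of B with edges vγ ∈ B such that γ ∈ M_v. For any u ≥ 1, the probability that some Q ∈ C(X, u) has |N_K(Q)| < u is at most C(J, u)·C(J+R, u-1)·(max_v (u - 1 + d_{B̄}(v))/(J+R))^{tu}, where B̄ is the bipartite complement of B. -/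
open scoped Classical

private lemma descFac_mul_pow_le (s n : ℕ) (hsn : s ≤ n) :
    ∀ t : ℕ, s.descFactorial t * n ^ t ≤ s ^ t * n.descFactorial t
  | 0 => by simp
  | (t + 1) => by
    rw [Nat.descFactorial_succ, Nat.descFactorial_succ, pow_succ, pow_succ]
    have h1 : (s - t) * n ≤ s * (n - t) := by
      rw [Nat.sub_mul, Nat.mul_sub]
      exact Nat.sub_le_sub_left (by calc s * t ≤ n * t := Nat.mul_le_mul_right t hsn
        _ = t * n := Nat.mul_comm n t) _
    calc (s - t) * s.descFactorial t * (n ^ t * n)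
        = ((s - t) * n) * (s.descFactorial t * n ^ t) := by ring
      _ ≤ (s * (n - t)) * (s ^ t * n.descFactorial t) :=
          Nat.mul_le_mul h1 (descFac_mul_pow_le s n hsn t)
      _ = s ^ t * s * ((n - t) * n.descFactorial t) := by ring

private lemma choose_ratio_le {s n t : ℕ} (hsn : s ≤ n) (htn : t ≤ n) (hn : 0 < n) {m : ℝ}
    (hsm : (s : ℝ) ≤ m) : (s.choose t : ℝ) / (n.choose t) ≤ (m / n) ^ t := by
  have hc : 0 < ((n.choose t : ℕ) : ℝ) := by exact_mod_cast Nat.choose_pos htn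
  have hnR : (0 : ℝ) < n := by exact_mod_cast hn
  have key : (s.choose t : ℝ) * (n : ℝ) ^ t ≤ (s : ℝ) ^ t * (n.choose t) := by
    have h := descFac_mul_pow_le s n hsn t
    rw [Nat.descFactorial_eq_factorial_mul_choose, Nat.descFactorial_eq_factorial_mul_choose] at h
    have h2 : t.factorial * (s.choose t * n ^ t) ≤ t.factorial * (s ^ t * n.choose t) := by
      calc t.factorial * (s.choose t * n ^ t) = t.factorial * s.choose t * n ^ t := by ring
        _ ≤ s ^ t * (t.factorial * n.choose t) := h
        _ = t.factorial * (s ^ t * n.choose t) := by ring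
    exact_mod_cast Nat.le_of_mul_le_mul_left h2 t.factorial_pos
  calc (s.choose t : ℝ) / (n.choose t) ≤ (s : ℝ) ^ t / (n : ℝ) ^ t := by
        rw [div_le_div_iff₀ hc (by positivity)]
        linarith [key]
    _ = ((s : ℝ) / n) ^ t := by rw [div_pow]
    _ ≤ (m / n) ^ t := by gcongr

private lemma filter_inst_congr {α : Type*} {p q : α → Prop} (i1 : DecidablePred p)
    (i2 : DecidablePred q) (s : Finset α) (h : ∀ x, p x ↔ q x) :
    @Finset.filter _ p i1 s = @Finset.filter _ q i2 s :=
  @Finset.filter_congr _ p q i1 i2 s (fun x _ => h x)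

private lemma filter_univ_inst_congr {α : Type*} (F1 F2 : Fintype α) {p q : α → Prop}
    (i1 : DecidablePred p) (i2 : DecidablePred q) (h : ∀ x, p x ↔ q x) :
    @Finset.filter _ p i1 (@Finset.univ _ F1) = @Finset.filter _ q i2 (@Finset.univ _ F2) := by
  obtain rfl := Subsingleton.elim F1 F2
  exact @Finset.filter_congr _ p q i1 i2 _ (fun x _ => h x)

private lemma card_filter_pi {X : Type*} {β : Type*} [Fintype X] [Fintype β]
    (p q : X → β → Prop) :
    (Finset.univ.filter (fun g : {g : X → β // ∀ v, p v (g v)} => ∀ v, q v (g.1 v))).card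
      = ∏ v, (Finset.univ.filter (fun S : β => p v S ∧ q v S)).card := by
  rw [← Fintype.card_subtype]
  have e : {g : {g : X → β // ∀ v, p v (g v)} // ∀ v, q v (g.1 v)} ≃
      ∀ v, {S : β // p v S ∧ q v S} :=
    { toFun := fun g v => ⟨g.1.1 v, g.1.2 v, g.2 v⟩
      invFun := fun f => ⟨⟨fun v => (f v).1, fun v => (f v).2.1⟩, fun v => (f v).2.2⟩
      left_inv := fun g => rfl
      right_inv := fun f => rfl }
  rw [Fintype.card_congr e, Fintype.card_pi]
  exact Finset.prod_congr rfl fun v _ => Fintype.card_subtype _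

set_option maxHeartbeats 2000000 in
/-- Union bound for failure of Hall's condition on the left: in the random subgraph `K`
of a bipartite graph `B` on `X ∪ Y` (`|X| = J`, `|Y| = J + R`) obtained by keeping, for
each `v ∈ X`, only the edges into a uniform `t`-subset `M_v ⊆ Y`, the probability that
some `u`-subset `Q ⊆ X` has `|N_K(Q)| < u` is at most
`C(J,u)·C(J+R,u-1)·((u - 1 + max_v d_{B̄}(v))/(J+R))^{tu}`. -/
theorem stmt16 {X Y : Type*} [Fintype X] [Fintype Y] [DecidableEq X] [DecidableEq Y]
    (B : Finset (X × Y)) (J R : ℕ) (hJ : 0 < J)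
    (hX : Fintype.card X = J) (hY : Fintype.card Y = J + R)
    (t : ℕ) (ht : t ≤ J + R) (u : ℕ) (hu : 1 ≤ u)
    (dmax : ℕ)
    (hdmax : ∀ v : X, (Finset.univ.filter (fun γ : Y => (v, γ) ∉ B)).card ≤ dmax) :
    ((Finset.univ.filter
        (fun g : {g : X → Finset Y // ∀ v, (g v).card = t} =>
          ∃ Q : Finset X, Q.card = u ∧
            (Finset.univ.filter
              (fun γ : Y => ∃ v ∈ Q, (v, γ) ∈ B ∧ γ ∈ g.1 v)).card < u)).card : ℝ) /
      (Fintype.card {g : X → Finset Y // ∀ v, (g v).card = t}) ≤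
    (J.choose u : ℝ) * ((J + R).choose (u - 1) : ℝ) *
      (((u : ℝ) - 1 + dmax) / (J + R)) ^ (t * u) := by
  set n := J + R with hn
  set Ω := {g : X → Finset Y // ∀ v, (g v).card = t} with hΩ
  set Nb : X → Finset Y := fun v => Finset.univ.filter (fun γ : Y => (v, γ) ∉ B) with hNbdef
  set E : Finset X → Finset Y → Finset Ω := fun Q Z =>
    Finset.univ.filter (fun g : Ω => ∀ v, v ∈ Q → g.1 v ⊆ Z ∪ Nb v) with hEdef
  set PQ := Finset.powersetCard u (Finset.univ : Finset X) with hPQ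
  set PZ := Finset.powersetCard (u - 1) (Finset.univ : Finset Y) with hPZ
  have hnpos : 0 < n := by omega
  have hnR : (0 : ℝ) < n := by exact_mod_cast hnpos
  set m : ℝ := (u : ℝ) - 1 + dmax with hm
  have hu1 : (1 : ℝ) ≤ (u : ℝ) := by exact_mod_cast hu
  have hd0 : (0 : ℝ) ≤ (dmax : ℝ) := by positivity
  have hm0 : (0 : ℝ) ≤ m := by rw [hm]; linarith
  set r : ℝ := (m / n) ^ t with hr
  have hr0 : (0 : ℝ) ≤ r := by positivity
  have hfilter_card : (Finset.univ.filter (fun S : Finset Y => S.card = t)).card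
      = n.choose t := by
    rw [← Finset.powerset_univ, ← Finset.powersetCard_eq_filter, Finset.card_powersetCard,
      Finset.card_univ, hY]
  have hNprodN : Fintype.card Ω = ∏ _v : X, n.choose t := by
    have e : Ω ≃ ∀ _v : X, {S : Finset Y // S.card = t} :=
      Equiv.subtypePiEquivPi (p := fun (_ : X) (S : Finset Y) => S.card = t)
    rw [Fintype.card_congr e, Fintype.card_pi]
    refine Finset.prod_congr rfl fun v _ => ?_
    rw [Fintype.card_subtype, hfilter_card]
  have hcpos : 0 < n.choose t := Nat.choose_pos ht
  have hcR : (0 : ℝ) < (n.choose t : ℝ) := by exact_mod_cast hcpos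
  have hNprod : (Fintype.card Ω : ℝ) = ∏ _v : X, (n.choose t : ℝ) := by
    rw [hNprodN]; push_cast; rfl
  have hNpos : (0 : ℝ) < (Fintype.card Ω : ℝ) := by
    rw [hNprod]; exact Finset.prod_pos fun _ _ => hcR
  -- Step 1: union bound inclusion
  have hBadsub : (Finset.univ.filter
        (fun g : Ω =>
          ∃ Q : Finset X, Q.card = u ∧
            (Finset.univ.filter
              (fun γ : Y => ∃ v ∈ Q, (v, γ) ∈ B ∧ γ ∈ g.1 v)).card < u))
      ⊆ PQ.biUnion (fun Q => PZ.biUnion (fun Z => E Q Z)) := by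
    intro g hg
    rw [Finset.mem_filter] at hg
    obtain ⟨-, Q, hQc, hlt⟩ := hg
    have huJ : u ≤ J := by
      rw [← hQc, ← hX, ← Finset.card_univ]; exact Finset.card_le_univ Q
    obtain ⟨Z, hNZ, -, hZc⟩ := Finset.exists_subsuperset_card_eq
      (Finset.subset_univ (Finset.univ.filter
        (fun γ : Y => ∃ v ∈ Q, (v, γ) ∈ B ∧ γ ∈ g.1 v)))
      (Nat.le_sub_one_of_lt hlt) (by rw [Finset.card_univ, hY]; omega)
    refine Finset.mem_biUnion.2 ⟨Q, Finset.mem_powersetCard_univ.2 hQc,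
      Finset.mem_biUnion.2 ⟨Z, Finset.mem_powersetCard_univ.2 hZc, ?_⟩⟩
    rw [hEdef, Finset.mem_filter]
    refine ⟨Finset.mem_univ _, fun v hv γ hγ => ?_⟩
    by_cases hB : (v, γ) ∈ B
    · exact Finset.mem_union_left _
        (hNZ (Finset.mem_filter.2 ⟨Finset.mem_univ _, v, hv, hB, hγ⟩))
    · exact Finset.mem_union_right _ (Finset.mem_filter.2 ⟨Finset.mem_univ _, hB⟩)
  have hB1 : ((Finset.univ.filter
        (fun g : Ω =>
          ∃ Q : Finset X, Q.card = u ∧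
            (Finset.univ.filter
              (fun γ : Y => ∃ v ∈ Q, (v, γ) ∈ B ∧ γ ∈ g.1 v)).card < u)).card : ℝ)
      ≤ ∑ Q ∈ PQ, ∑ Z ∈ PZ, ((E Q Z).card : ℝ) := by
    have h := (Finset.card_le_card hBadsub).trans
      (Finset.card_biUnion_le.trans (Finset.sum_le_sum fun Q _ => Finset.card_biUnion_le))
    exact_mod_cast h
  -- Step 2: per-event ratio bound
  have hratio : ∀ Q ∈ PQ, ∀ Z ∈ PZ,
      ((E Q Z).card : ℝ) / (Fintype.card Ω : ℝ) ≤ r ^ u := by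
    intro Q hQ Z hZ
    have hQc : Q.card = u := Finset.mem_powersetCard_univ.1 hQ
    have hZc : Z.card = u - 1 := Finset.mem_powersetCard_univ.1 hZ
    have hEcard : (E Q Z).card = ∏ v,
        (Finset.univ.filter
          (fun S : Finset Y => S.card = t ∧ (v ∈ Q → S ⊆ Z ∪ Nb v))).card := by
      convert card_filter_pi (fun _ S => S.card = t)
        (fun v S => v ∈ Q → S ⊆ Z ∪ Nb v) using 2
      · rw [hEdef]
        beta_reduce
        exact filter_univ_inst_congr _ _ _ _ fun _ => Iff.rfl
      · exact congrArg Finset.card (filter_univ_inst_congr _ _ _ _ fun _ => Iff.rfl)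
    rw [hEcard, hNprod]
    push_cast
    rw [← Finset.prod_div_distrib]
    have hbound : ∀ v ∈ (Finset.univ : Finset X),
        ((Finset.univ.filter
          (fun S : Finset Y => S.card = t ∧ (v ∈ Q → S ⊆ Z ∪ Nb v))).card : ℝ)
            / (n.choose t : ℝ) ≤ if v ∈ Q then r else 1 := by
      intro v _
      by_cases hv : v ∈ Q
      · rw [if_pos hv]
        have hsub : (Finset.univ.filter
            (fun S : Finset Y => S.card = t ∧ (v ∈ Q → S ⊆ Z ∪ Nb v)))
            ⊆ Finset.powersetCard t (Z ∪ Nb v) := by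
          intro S hS
          rw [Finset.mem_filter] at hS
          exact Finset.mem_powersetCard.2 ⟨hS.2.2 hv, hS.2.1⟩
        have hle : (Finset.univ.filter
            (fun S : Finset Y => S.card = t ∧ (v ∈ Q → S ⊆ Z ∪ Nb v))).card
            ≤ ((Z ∪ Nb v).card).choose t := by
          rw [← Finset.card_powersetCard]; exact Finset.card_le_card hsub
        have hsn : (Z ∪ Nb v).card ≤ n := by
          rw [← hY, ← Finset.card_univ]; exact Finset.card_le_univ _
        have hsm : ((Z ∪ Nb v).card : ℝ) ≤ m := by
          have h1 : (Z ∪ Nb v).card ≤ (u - 1) + dmax := by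
            calc (Z ∪ Nb v).card ≤ Z.card + (Nb v).card := Finset.card_union_le _ _
              _ ≤ (u - 1) + dmax := by rw [hZc]; exact Nat.add_le_add_left (hdmax v) _
          calc ((Z ∪ Nb v).card : ℝ) ≤ (((u - 1) + dmax : ℕ) : ℝ) := by exact_mod_cast h1
            _ = m := by rw [hm]; push_cast [Nat.cast_sub hu]; ring
        calc ((Finset.univ.filter
            (fun S : Finset Y => S.card = t ∧ (v ∈ Q → S ⊆ Z ∪ Nb v))).card : ℝ)
              / (n.choose t : ℝ)
            ≤ ((((Z ∪ Nb v).card).choose t : ℕ) : ℝ) / (n.choose t : ℝ) := by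
              gcongr
          _ ≤ (m / n) ^ t := choose_ratio_le hsn ht hnpos hsm
          _ = r := hr.symm
      · rw [if_neg hv]
        have heq : (Finset.univ.filter
            (fun S : Finset Y => S.card = t ∧ (v ∈ Q → S ⊆ Z ∪ Nb v)))
            = Finset.univ.filter (fun S : Finset Y => S.card = t) := by
          apply Finset.filter_congr
          intro S _
          simp [hv]
        rw [heq, hfilter_card, div_self (ne_of_gt hcR)]
    calc (∏ v, ((Finset.univ.filter
          (fun S : Finset Y => S.card = t ∧ (v ∈ Q → S ⊆ Z ∪ Nb v))).card : ℝ)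
            / (n.choose t : ℝ))
        ≤ ∏ v, (if v ∈ Q then r else 1) :=
          Finset.prod_le_prod (fun v _ => by positivity) hbound
      _ = r ^ u := by
          rw [Finset.prod_ite_mem, Finset.univ_inter, Finset.prod_const, hQc]
  -- Combine
  have hcount : ∑ Q ∈ PQ, ∑ Z ∈ PZ, r ^ u
      = (J.choose u : ℝ) * ((n.choose (u - 1) : ℕ) : ℝ) * r ^ u := by
    rw [Finset.sum_const, Finset.sum_const, hPQ, hPZ, Finset.card_powersetCard,
      Finset.card_powersetCard, Finset.card_univ, Finset.card_univ, hX, hY]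
    simp [nsmul_eq_mul]; ring
  calc ((Finset.univ.filter
        (fun g : Ω =>
          ∃ Q : Finset X, Q.card = u ∧
            (Finset.univ.filter
              (fun γ : Y => ∃ v ∈ Q, (v, γ) ∈ B ∧ γ ∈ g.1 v)).card < u)).card : ℝ)
        / (Fintype.card Ω : ℝ)
      ≤ (∑ Q ∈ PQ, ∑ Z ∈ PZ, ((E Q Z).card : ℝ)) / (Fintype.card Ω : ℝ) := by gcongr
    _ = ∑ Q ∈ PQ, ∑ Z ∈ PZ, ((E Q Z).card : ℝ) / (Fintype.card Ω : ℝ) := by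
        rw [Finset.sum_div]; exact Finset.sum_congr rfl fun Q _ => by rw [Finset.sum_div]
    _ ≤ ∑ Q ∈ PQ, ∑ Z ∈ PZ, r ^ u :=
        Finset.sum_le_sum fun Q hQ => Finset.sum_le_sum fun Z hZ => hratio Q hQ Z hZ
    _ = (J.choose u : ℝ) * ((n.choose (u - 1) : ℕ) : ℝ) * r ^ u := hcount
    _ = (J.choose u : ℝ) * ((J + R).choose (u - 1) : ℝ) *
        (((u : ℝ) - 1 + dmax) / (J + R)) ^ (t * u) := by
        rw [hr, hm, ← pow_mul, hn]
        push_cast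
        ring
end

section
/- Let B be a bipartite graph on X ∪ Y with |X| = J, |Y| = J + R, and |B̄| ≤ 2ζD² non-edges, and let each v ∈ X independently receive a uniform t-subset M_v of Y with q = t/|Y|. Then for any Z ⊆ Y with |Z| = a, the probability that every vertex of Z is isolated in the induced random graph K (where v ∼_K γ iff v ∼_B γ and γ ∈ M_v) is at most (1-q)^{Ja - |B̄|}. -/
open scoped Classical

open Finset

/-- Number of `t`-subsets of a fintype avoiding a fixed set `W`. -/
lemma card_avoid {Y : Type*} [Fintype Y] [DecidableEq Y] (W : Finset Y) (t : ℕ) :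
    Fintype.card {s : Finset Y // s.card = t ∧ Disjoint s W} =
      (Fintype.card Y - W.card).choose t := by
  rw [Fintype.card_subtype]
  have h : (univ.filter (fun s : Finset Y => s.card = t ∧ Disjoint s W)) =
      Finset.powersetCard t Wᶜ := by
    ext s
    simp only [mem_filter, mem_univ, true_and, Finset.mem_powersetCard]
    constructor
    · rintro ⟨h1, h2⟩
      exact ⟨fun x hx => Finset.mem_compl.2 fun hW => (Finset.disjoint_left.1 h2) hx hW, h1⟩
    · rintro ⟨h1, h2⟩
      exact ⟨h2, Finset.disjoint_left.2 fun x hx hW => (Finset.mem_compl.1 (h1 hx)) hW⟩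
  rw [h, Finset.card_powersetCard, Finset.card_compl]

/-- The ratio inequality for binomial coefficients. -/
lemma choose_ratio_le_s17 (n t : ℕ) (hn : 0 < n) (ht : t ≤ n) (m : ℕ) :
    ((n - m).choose t : ℝ) ≤ (n.choose t : ℝ) * (((n : ℝ) - t) / n) ^ m := by
  have hn' : (0 : ℝ) < n := by exact_mod_cast hn
  have htn : (t : ℝ) ≤ n := by exact_mod_cast ht
  have hr0 : (0 : ℝ) ≤ ((n : ℝ) - t) / n := div_nonneg (by linarith) hn'.le
  rcases Nat.eq_zero_or_pos t with rfl | ht0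
  · simp [div_self hn'.ne', Nat.choose_zero_right]
  induction m with
  | zero => simp
  | succ m ih =>
    rcases Nat.lt_or_ge (n - m) 1 with hk | hk
    · have h1 : n - (m + 1) = 0 := by omega
      rw [h1, Nat.choose_eq_zero_of_lt ht0]
      push_cast
      positivity
    · set k := n - m with hkdef
      have hkle : k ≤ n := Nat.sub_le _ _
      have step : ((k - 1).choose t : ℝ) ≤ (k.choose t : ℝ) * (((n : ℝ) - t) / n) := by
        rcases Nat.lt_or_ge (k - 1) t with h | h
        · rw [Nat.choose_eq_zero_of_lt h]
          push_cast
          positivity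
        · have hk1 : (k - 1) + 1 = k := by omega
          have htk : t ≤ k := le_trans h (Nat.sub_le _ _)
          have hid : (k - 1).choose t * k = k.choose t * (k - t) := by
            have := Nat.choose_mul_succ_eq (k - 1) t
            rwa [hk1] at this
          have hidR : ((k - 1).choose t : ℝ) * k = (k.choose t : ℝ) * ((k : ℝ) - t) := by
            have := congrArg (fun x : ℕ => (x : ℝ)) hid
            push_cast [Nat.cast_sub htk] at this
            convert this using 2 <;> push_cast <;> ring
          have hkR : (0 : ℝ) < k := by exact_mod_cast (by omega : 0 < k)
          have hdiv : ((k : ℝ) - t) / k ≤ ((n : ℝ) - t) / n := by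
            rw [div_le_div_iff₀ hkR hn']
            have hknR : (k : ℝ) ≤ n := by exact_mod_cast hkle
            have ht0R : (0 : ℝ) ≤ t := Nat.cast_nonneg t
            nlinarith
          have : ((k - 1).choose t : ℝ) = (k.choose t : ℝ) * (((k : ℝ) - t) / k) := by
            field_simp
            linarith [hidR]
          rw [this]
          have hc0 : (0 : ℝ) ≤ (k.choose t : ℝ) := Nat.cast_nonneg _
          exact mul_le_mul_of_nonneg_left hdiv hc0
      have h1 : n - (m + 1) = k - 1 := by omega
      rw [h1, pow_succ, ← mul_assoc]
      calc ((k - 1).choose t : ℝ) ≤ (k.choose t : ℝ) * (((n : ℝ) - t) / n) := step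
        _ ≤ ((n.choose t : ℝ) * (((n : ℝ) - t) / n) ^ m) * (((n : ℝ) - t) / n) :=
          mul_le_mul_of_nonneg_right ih hr0

/-- In the random subgraph `K` of a bipartite graph `B` on `X ∪ Y` (`|X| = J`,
`|Y| = J + R`, at most `2ζD²` non-edges) obtained by keeping, for each `v ∈ X`, only the
edges into a uniform `t`-subset `M_v ⊆ Y`, the probability that every vertex of a fixed
`a`-set `Z ⊆ Y` is isolated in `K` is at most `(1-q)^{Ja - |B̄|}` where `q = t/|Y|`. -/
theorem stmt17 {X Y : Type*} [Fintype X] [Fintype Y] [DecidableEq X] [DecidableEq Y]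
    (B : Finset (X × Y)) (J R : ℕ) (hJ : 0 < J)
    (hX : Fintype.card X = J) (hY : Fintype.card Y = J + R)
    (ζ : ℝ) (D : ℕ) (hζ : 0 < ζ) (hD : 0 < D)
    (hBbar : ((Finset.univ.filter (fun p : X × Y => p ∉ B)).card : ℝ) ≤ 2 * ζ * D ^ 2)
    (t : ℕ) (ht : t ≤ J + R) (q : ℝ) (hq : q = (t : ℝ) / (J + R))
    (Z : Finset Y) (a : ℕ) (hZ : Z.card = a) :
    ((Finset.univ.filter
        (fun g : {g : X → Finset Y // ∀ v, (g v).card = t} =>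
          ∀ γ ∈ Z, ∀ v : X, (v, γ) ∈ B → γ ∉ g.1 v)).card : ℝ) /
      (Fintype.card {g : X → Finset Y // ∀ v, (g v).card = t}) ≤
    (1 - q) ^ (J * a - (Finset.univ.filter (fun p : X × Y => p ∉ B)).card) := by
  have hYpos : 0 < J + R := by omega
  set n := J + R with hn
  set Zv : X → Finset Y := fun v => Z.filter (fun γ => (v, γ) ∈ B) with hZv
  set C := n.choose t with hC
  have hCpos : 0 < C := Nat.choose_pos ht
  -- total count
  have htotal : Fintype.card {g : X → Finset Y // ∀ v, (g v).card = t} = C ^ J := by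
    rw [Fintype.card_congr (@Equiv.subtypePiEquivPi X (fun _ => Finset Y)
      (fun _ s => s.card = t))]
    rw [Fintype.card_pi]
    simp [Fintype.card_finset_len, hY, hX, hC]
  -- event count
  have hevent : (Finset.univ.filter
        (fun g : {g : X → Finset Y // ∀ v, (g v).card = t} =>
          ∀ γ ∈ Z, ∀ v : X, (v, γ) ∈ B → γ ∉ g.1 v)).card =
      ∏ v : X, (n - (Zv v).card).choose t := by
    rw [← Fintype.card_subtype]
    have e1 := Equiv.subtypeSubtypeEquivSubtypeInter
      (p := fun g : X → Finset Y => ∀ v, (g v).card = t)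
      (q := fun g : X → Finset Y => ∀ γ ∈ Z, ∀ v : X, (v, γ) ∈ B → γ ∉ g v)
    have e2 : {g : X → Finset Y //
          (∀ v, (g v).card = t) ∧ ∀ γ ∈ Z, ∀ v : X, (v, γ) ∈ B → γ ∉ g v} ≃
        {g : X → Finset Y // ∀ v, (g v).card = t ∧ Disjoint (g v) (Zv v)} := by
      apply Equiv.subtypeEquivRight
      intro g
      constructor
      · rintro ⟨h1, h2⟩ v
        refine ⟨h1 v, Finset.disjoint_left.2 fun γ hg hzv => ?_⟩
        rw [hZv, Finset.mem_filter] at hzv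
        exact h2 γ hzv.1 v hzv.2 hg
      · intro h
        refine ⟨fun v => (h v).1, fun γ hγ v hB hg => ?_⟩
        exact Finset.disjoint_left.1 (h v).2 hg (by rw [hZv]; exact Finset.mem_filter.2 ⟨hγ, hB⟩)
    rw [Fintype.card_congr ((e1.trans e2).trans
      (@Equiv.subtypePiEquivPi X (fun _ => Finset Y)
        (fun v s => s.card = t ∧ Disjoint s (Zv v))))]
    rw [Fintype.card_pi]
    congr 1
    ext v
    rw [card_avoid, hY]
  -- relation between 1 - q and (n - t)/n
  have hnR : (0 : ℝ) < (n : ℝ) := by exact_mod_cast hYpos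
  have hncast : (n : ℝ) = (J : ℝ) + R := by rw [hn]; push_cast; ring
  have hr : 1 - q = ((n : ℝ) - t) / n := by
    rw [hq, hncast]
    have : (J : ℝ) + R ≠ 0 := by rw [← hncast]; exact hnR.ne'
    field_simp
  have htnR : (t : ℝ) ≤ n := by exact_mod_cast ht
  have hr0 : (0 : ℝ) ≤ 1 - q := by rw [hr]; apply div_nonneg <;> linarith
  have hr1 : 1 - q ≤ 1 := by
    rw [hr, div_le_one hnR]
    have : (0 : ℝ) ≤ (t : ℝ) := Nat.cast_nonneg t
    linarith
  -- exponent inequality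
  have hexp : J * a - (Finset.univ.filter (fun p : X × Y => p ∉ B)).card ≤
      ∑ v : X, (Zv v).card := by
    have hsplit : ∀ v : X, (Zv v).card + (Z.filter (fun γ => (v, γ) ∉ B)).card = a := by
      intro v
      rw [hZv, ← hZ]
      exact Finset.card_filter_add_card_filter_not _
    have hsum : ∑ v : X, (Z.filter (fun γ => (v, γ) ∉ B)).card ≤
        (Finset.univ.filter (fun p : X × Y => p ∉ B)).card := by
      have h1 : ∑ v : X, (Z.filter (fun γ => (v, γ) ∉ B)).card =
          ((Finset.univ ×ˢ Z).filter (fun p : X × Y => p ∉ B)).card := by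
        rw [Finset.card_filter, Finset.sum_product]
        simp only [Finset.card_filter]
      rw [h1]
      apply Finset.card_le_card
      intro p hp
      rw [Finset.mem_filter] at hp ⊢
      exact ⟨Finset.mem_univ _, hp.2⟩
    have hJa : J * a = ∑ v : X, (Zv v).card +
        ∑ v : X, (Z.filter (fun γ => (v, γ) ∉ B)).card := by
      calc J * a = ∑ _v : X, a := by
            rw [Finset.sum_const, smul_eq_mul, Finset.card_univ, hX]
        _ = ∑ v : X, ((Zv v).card + (Z.filter (fun γ => (v, γ) ∉ B)).card) :=
            Finset.sum_congr rfl fun v _ => (hsplit v).symm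
        _ = _ := Finset.sum_add_distrib
    rw [Nat.sub_le_iff_le_add, hJa]
    exact Nat.add_le_add_left hsum _
  -- main chain
  rw [hevent, htotal]
  have hprod : (∏ v : X, ((n - (Zv v).card).choose t : ℝ)) ≤
      (C : ℝ) ^ J * (1 - q) ^ (∑ v : X, (Zv v).card) := by
    calc (∏ v : X, ((n - (Zv v).card).choose t : ℝ))
        ≤ ∏ v : X, ((C : ℝ) * (1 - q) ^ (Zv v).card) := by
          apply Finset.prod_le_prod
          · intro v _; exact Nat.cast_nonneg _
          · intro v _
            rw [hr]
            exact choose_ratio_le_s17 n t hYpos ht _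
      _ = (C : ℝ) ^ J * (1 - q) ^ (∑ v : X, (Zv v).card) := by
          rw [Finset.prod_mul_distrib, Finset.prod_const, Finset.prod_pow_eq_pow_sum,
            Finset.card_univ, hX]
  have hCJpos : (0 : ℝ) < (C : ℝ) ^ J := by positivity
  push_cast
  rw [div_le_iff₀ hCJpos]
  calc (∏ v : X, ((n - (Zv v).card).choose t : ℝ))
      ≤ (C : ℝ) ^ J * (1 - q) ^ (∑ v : X, (Zv v).card) := hprod
    _ ≤ (C : ℝ) ^ J *
        (1 - q) ^ (J * a - (Finset.univ.filter (fun p : X × Y => p ∉ B)).card) := by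
        apply mul_le_mul_of_nonneg_left _ (le_of_lt hCJpos)
        exact pow_le_pow_of_le_one hr0 hr1 hexp
    _ = (1 - q) ^ (J * a - (Finset.univ.filter (fun p : X × Y => p ∉ B)).card)
        * (C : ℝ) ^ J := by ring
end

section
/- Suppose A_1, ..., A_m are events in a probability space with P(A_i) ≤ p for all i, and Γ is a graph on [m] such that each A_i is mutually independent of the collection {A_j : j not adjacent to i in Γ, j ≠ i}. If e·p·(Δ(Γ) + 1) < 1, then P(⋂ Ā_i) > 0. -/
/-!
Write `B S = ⋂ j ∈ S, (A j)ᶜ` and `x = 1 / (Δ + 2)`. The local lemma is the bound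
`μ (A i ∩ B S) ≤ x · μ (B S)` for `i ∉ S` (a conditional probability bound with the
denominator cleared), proved by strong induction on `S`: splitting `S` into the neighbours `N`
of `i` and the rest `S'`, independence gives `μ (A i ∩ B S) ≤ μ (A i) · μ (B S')`, while
removing the neighbours one at a time and applying the induction hypothesis at each step gives
`μ (B S) ≥ (1 - x) ^ |N| · μ (B S')`. Peeling off all indices in the same way yields
`μ (B univ) ≥ (1 - x) ^ m > 0`. The hypothesis `e p (Δ + 1) < 1` enters only through
`p ≤ x (1 - x) ^ Δ`, which holds because `(1 + 1 / (Δ + 1)) ^ (Δ + 1) ≤ e`.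
-/

open MeasureTheory Finset Real

section LovaszLocalLemma

variable {Ω ι : Type*} [MeasurableSpace Ω] {μ : Measure Ω} {A : ι → Set Ω}

theorem measureReal_biInter_compl_insert [IsFiniteMeasure μ] [DecidableEq ι] {j : ι}
    (hj : MeasurableSet (A j)) (S : Finset ι) :
    μ.real (⋂ k ∈ insert j S, (A k)ᶜ) =
      μ.real (⋂ k ∈ S, (A k)ᶜ) - μ.real (A j ∩ ⋂ k ∈ S, (A k)ᶜ) := by
  rw [set_biInter_insert, Set.inter_comm (A j), Set.inter_comm _ (⋂ k ∈ S, (A k)ᶜ),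
    ← Set.sdiff_eq, ← measureReal_inter_add_sdiff (s := ⋂ k ∈ S, (A k)ᶜ) hj]
  ring

theorem one_sub_pow_mul_le_measureReal_biInter_compl_union [IsFiniteMeasure μ] [DecidableEq ι]
    {x : ℝ} (hx : x ≤ 1) (hA : ∀ i, MeasurableSet (A i)) (S T : Finset ι)
    (h : ∀ j ∈ T, ∀ U ⊆ T, j ∉ U →
      μ.real (A j ∩ ⋂ k ∈ S ∪ U, (A k)ᶜ) ≤ x * μ.real (⋂ k ∈ S ∪ U, (A k)ᶜ)) :
    (1 - x) ^ #T * μ.real (⋂ k ∈ S, (A k)ᶜ) ≤ μ.real (⋂ k ∈ S ∪ T, (A k)ᶜ) := by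
  induction T using Finset.induction_on with
  | empty => simp
  | insert j T hjT ih =>
    have hT := ih fun k hk U hU => h k (mem_insert_of_mem hk) U (hU.trans (subset_insert j T))
    have hj := h j (mem_insert_self j T) T (subset_insert j T) hjT
    have hT' := mul_le_mul_of_nonneg_left hT (sub_nonneg.2 hx)
    rw [union_insert, measureReal_biInter_compl_insert (hA j), card_insert_of_notMem hjT,
      pow_succ]
    linarith

theorem measureReal_inter_biInter_compl_le [IsFiniteMeasure μ] {Γ : SimpleGraph ι}
    [Γ.LocallyFinite] {x : ℝ} {d : ℕ} (hx₀ : 0 ≤ x) (hx₁ : x ≤ 1)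
    (hA : ∀ i, MeasurableSet (A i)) (hp : ∀ i, μ.real (A i) ≤ x * (1 - x) ^ d)
    (hΓ : ∀ i, Γ.degree i ≤ d)
    (hind : ∀ i (S : Finset ι), (∀ j ∈ S, ¬ Γ.Adj i j ∧ j ≠ i) →
      μ.real (A i ∩ ⋂ j ∈ S, (A j)ᶜ) = μ.real (A i) * μ.real (⋂ j ∈ S, (A j)ᶜ))
    (S : Finset ι) {i : ι} (hi : i ∉ S) :
    μ.real (A i ∩ ⋂ j ∈ S, (A j)ᶜ) ≤ x * μ.real (⋂ j ∈ S, (A j)ᶜ) := by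
  classical
  induction S using Finset.strongInduction generalizing i with
  | H S ih =>
  set N := S.filter (Γ.Adj i)
  set S' := S.filter (fun j => ¬ Γ.Adj i j)
  have hN : #N ≤ d := by
    refine (card_le_card fun j hj => ?_).trans (hΓ i)
    exact (Γ.mem_neighborFinset i j).2 (mem_filter.1 hj).2
  have hS' : ∀ j ∈ S', ¬ Γ.Adj i j ∧ j ≠ i := fun j hj =>
    ⟨(mem_filter.1 hj).2, fun h => hi (h ▸ (mem_filter.1 hj).1)⟩
  have hpeel : (1 - x) ^ #N * μ.real (⋂ j ∈ S', (A j)ᶜ) ≤ μ.real (⋂ j ∈ S, (A j)ᶜ) := by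
    have hS : S' ∪ N = S := by rw [union_comm]; exact filter_union_filter_not_eq _ _
    refine hS ▸ one_sub_pow_mul_le_measureReal_biInter_compl_union hx₁ hA S' N
      fun j hj U hU hjU => ih _ ?_ ?_
    · refine (ssubset_iff_of_subset ?_).2 ⟨j, (mem_filter.1 hj).1, ?_⟩
      · exact union_subset (filter_subset _ _) (hU.trans (filter_subset _ _))
      · simpa [S', hjU] using fun _ => (mem_filter.1 hj).2
    · simpa [S', hjU] using fun _ => (mem_filter.1 hj).2
  calc μ.real (A i ∩ ⋂ j ∈ S, (A j)ᶜ) ≤ μ.real (A i ∩ ⋂ j ∈ S', (A j)ᶜ) := by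
        refine measureReal_mono (Set.inter_subset_inter_right _ ?_)
        exact Set.biInter_subset_biInter_left (coe_subset.2 (filter_subset _ _))
    _ = μ.real (A i) * μ.real (⋂ j ∈ S', (A j)ᶜ) := hind i S' hS'
    _ ≤ x * (1 - x) ^ #N * μ.real (⋂ j ∈ S', (A j)ᶜ) := by
        gcongr
        have hpow : (1 - x) ^ d ≤ (1 - x) ^ #N :=
          pow_le_pow_of_le_one (sub_nonneg.2 hx₁) (by linarith) hN
        exact (hp i).trans (mul_le_mul_of_nonneg_left hpow hx₀)
    _ ≤ x * μ.real (⋂ j ∈ S, (A j)ᶜ) := by rw [mul_assoc]; gcongr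

theorem one_sub_pow_card_le_measureReal_iInter_compl [IsProbabilityMeasure μ] [Fintype ι]
    {Γ : SimpleGraph ι} [Γ.LocallyFinite] {x : ℝ} {d : ℕ} (hx₀ : 0 ≤ x) (hx₁ : x ≤ 1)
    (hA : ∀ i, MeasurableSet (A i)) (hp : ∀ i, μ.real (A i) ≤ x * (1 - x) ^ d)
    (hΓ : ∀ i, Γ.degree i ≤ d)
    (hind : ∀ i (S : Finset ι), (∀ j ∈ S, ¬ Γ.Adj i j ∧ j ≠ i) →
      μ.real (A i ∩ ⋂ j ∈ S, (A j)ᶜ) = μ.real (A i) * μ.real (⋂ j ∈ S, (A j)ᶜ)) :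
    (1 - x) ^ Fintype.card ι ≤ μ.real (⋂ i, (A i)ᶜ) := by
  classical
  have h := one_sub_pow_mul_le_measureReal_biInter_compl_union hx₁ hA ∅ univ
    fun j _ U _ hjU => by
      simpa using measureReal_inter_biInter_compl_le hx₀ hx₁ hA hp hΓ hind U hjU
  simpa using h

end LovaszLocalLemma

theorem add_two_div_add_one_pow_le_exp_one (d : ℕ) :
    ((d + 2 : ℝ) / (d + 1)) ^ (d + 1) ≤ exp 1 := by
  calc ((d + 2 : ℝ) / (d + 1)) ^ (d + 1) = ((d + 1 : ℝ)⁻¹ + 1) ^ (d + 1) := by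
        field_simp; ring
    _ ≤ exp (d + 1 : ℝ)⁻¹ ^ (d + 1) := by gcongr; exact add_one_le_exp _
    _ = exp 1 := by rw [← exp_nat_mul]; push_cast; field_simp

theorem inv_exp_one_mul_add_one_le (d : ℕ) :
    (exp 1 * (d + 1))⁻¹ ≤ (d + 2 : ℝ)⁻¹ * (1 - (d + 2 : ℝ)⁻¹) ^ d := by
  have h := add_two_div_add_one_pow_le_exp_one d
  rw [div_pow, div_le_iff₀ (by positivity)] at h
  have h1 : (1 : ℝ) - (d + 2 : ℝ)⁻¹ = (d + 1) / (d + 2) := by field_simp; ring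
  rw [h1, div_pow, inv_le_iff_one_le_mul₀ (by positivity), inv_mul_eq_div, div_div,
    div_mul_eq_mul_div, one_le_div (by positivity)]
  simp only [pow_succ] at h ⊢
  linarith

/-- Symmetric Lovász Local Lemma: if events `A₁, …, A_m` satisfy `P(A_i) ≤ p`, each `A_i`
is mutually independent of the collection of `A_j` with `j` not adjacent to `i` in a
dependency graph `Γ`, and `e·p·(Δ(Γ) + 1) < 1`, then with positive probability none of
the `A_i` occur. -/
theorem stmt19 {Ω : Type*} [MeasurableSpace Ω] (μ : MeasureTheory.Measure Ω)
    [MeasureTheory.IsProbabilityMeasure μ]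
    (m : ℕ) (A : Fin m → Set Ω) (hmeas : ∀ i, MeasurableSet (A i))
    (p : ℝ) (hp : ∀ i, μ (A i) ≤ ENNReal.ofReal p)
    (Γ : SimpleGraph (Fin m)) (_ : DecidableRel Γ.Adj)
    -- each `A i` is mutually independent of `{A j : j ≁ i, j ≠ i}`
    (hind : ∀ i : Fin m, ∀ S T : Finset (Fin m),
      (∀ j ∈ S, ¬ Γ.Adj i j ∧ j ≠ i) → (∀ j ∈ T, ¬ Γ.Adj i j ∧ j ≠ i) →
      μ (A i ∩ ((⋂ j ∈ S, A j) ∩ ⋂ j ∈ T, (A j)ᶜ)) =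
        μ (A i) * μ ((⋂ j ∈ S, A j) ∩ ⋂ j ∈ T, (A j)ᶜ))
    (hLLL : Real.exp 1 * p * ((Γ.maxDegree : ℝ) + 1) < 1) :
    0 < μ (⋂ i : Fin m, (A i)ᶜ) := by
  set x : ℝ := (Γ.maxDegree + 2 : ℝ)⁻¹
  have hx₁ : x < 1 := inv_lt_one_of_one_lt₀ (by linarith [Γ.maxDegree.cast_nonneg (α := ℝ)])
  have hpx : p ≤ x * (1 - x) ^ Γ.maxDegree := by
    refine le_trans ?_ (inv_exp_one_mul_add_one_le Γ.maxDegree)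
    rw [← one_div, le_div_iff₀ (by positivity)]
    linarith
  have hx₀ : 0 ≤ x := by positivity
  have hpA (i : Fin m) : μ.real (A i) ≤ x * (1 - x) ^ Γ.maxDegree :=
    ENNReal.toReal_le_of_le_ofReal (mul_nonneg hx₀ (pow_nonneg (sub_nonneg.2 hx₁.le) _))
      ((hp i).trans (ENNReal.ofReal_le_ofReal hpx))
  have hindReal (i : Fin m) (T : Finset (Fin m)) (hT : ∀ j ∈ T, ¬ Γ.Adj i j ∧ j ≠ i) :
      μ.real (A i ∩ ⋂ j ∈ T, (A j)ᶜ) = μ.real (A i) * μ.real (⋂ j ∈ T, (A j)ᶜ) := by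
    simpa [measureReal_def] using congrArg ENNReal.toReal (hind i ∅ T (by simp) hT)
  have hbound := one_sub_pow_card_le_measureReal_iInter_compl hx₀ hx₁.le hmeas hpA
    Γ.degree_le_maxDegree hindReal
  exact (ENNReal.toReal_pos_iff.1 ((pow_pos (sub_pos.2 hx₁) _).trans_le hbound)).1
end
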